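/- arXiv:math/0402276 — 9 statements merged into one kernel-verified Lean document; each statement's English description precedes it below -/
import Mathlib

section
/- The map ω_s : C_G(s) → ker π, g ↦ ω(g, s), is a group homomorphism, and its kernel is exactly π(C_{G'}(s')), the image under π of the centralizer of s' in G'. -/
open scoped commutatorElement

private lemma comm_central {G' : Type*} [Group G'] (x y z w : G')
    (hz : z ∈ Subgroup.center G') (hw : w ∈ Subgroup.center G') :
    ⁅x*z, y*w⁆ = ⁅x,y⁆ := by
  have cc : ∀ u ∈ Subgroup.center G', ∀ c : G', u * c * u⁻¹ = c := by
    intro u hu c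
    rw [← Subgroup.mem_center_iff.mp hu c]
    group
  calc ⁅x*z, y*w⁆ = x*(z*(y*w)*z⁻¹)*x⁻¹*(y*w)⁻¹ := by group
    _ = x*(y*w)*x⁻¹*(y*w)⁻¹ := by rw [cc z hz]
    _ = x*y*(w*x⁻¹*w⁻¹)*y⁻¹ := by group
    _ = ⁅x,y⁆ := by rw [cc w hw]; group

private lemma lift_indep {G' G : Type*} [Group G'] [Group G] (π : G' →* G)
    (hker : π.ker ≤ Subgroup.center G') {a b x y : G'}
    (ha : π a = π x) (hb : π b = π y) : ⁅a, b⁆ = ⁅x, y⁆ := by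
  have hz : x⁻¹ * a ∈ Subgroup.center G' := by
    apply hker
    rw [MonoidHom.mem_ker, map_mul, map_inv, ha, inv_mul_cancel]
  have hw : y⁻¹ * b ∈ Subgroup.center G' := by
    apply hker
    rw [MonoidHom.mem_ker, map_mul, map_inv, hb, inv_mul_cancel]
  calc ⁅a, b⁆ = ⁅x * (x⁻¹ * a), y * (y⁻¹ * b)⁆ := by group
    _ = ⁅x, y⁆ := comm_central x y _ _ hz hw

/-- For a surjective homomorphism `π : G' → G` with central kernel, `ω(x, y)` is the
commutator of (chosen) lifts of `x` and `y`; for commuting `x, y` it lies in `ker π`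
and does not depend on the chosen lifts. -/
noncomputable def omegaMap {G' G : Type*} [Group G'] [Group G] (π : G' →* G)
    (hsurj : Function.Surjective π) (x y : G) : G' :=
  ⁅Function.surjInv hsurj x, Function.surjInv hsurj y⁆

/-- The map `ω_s : C_G(s) → ker π`, `g ↦ ω(g, s)`, is a group
homomorphism, and its kernel is exactly `π(C_{G'}(s'))`. -/
theorem omega_s_hom_and_ker
    {G' G : Type*} [Group G'] [Group G] (π : G' →* G)
    (hsurj : Function.Surjective π) (hker : π.ker ≤ Subgroup.center G')
    (s : G) (s' : G') (hs' : π s' = s) :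
    (∀ g ∈ Subgroup.centralizer {s}, omegaMap π hsurj g s ∈ π.ker) ∧
    (∀ g ∈ Subgroup.centralizer {s}, ∀ h ∈ Subgroup.centralizer {s},
        omegaMap π hsurj (g * h) s = omegaMap π hsurj g s * omegaMap π hsurj h s) ∧
    {g : G | g ∈ Subgroup.centralizer {s} ∧ omegaMap π hsurj g s = 1}
      = ((Subgroup.centralizer {s'}).map π : Set G) := by
  have hπ : ∀ x : G, π (Function.surjInv hsurj x) = x := fun x =>
    Function.surjInv_eq hsurj x
  have cc : ∀ u ∈ Subgroup.center G', ∀ c : G', c * u * c⁻¹ = u := by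
    intro u hu c
    rw [Subgroup.mem_center_iff.mp hu c]
    group
  -- part 1: membership in the kernel
  have part1 : ∀ g ∈ Subgroup.centralizer {s}, omegaMap π hsurj g s ∈ π.ker := by
    intro g hg
    have hcomm : s * g = g * s := Subgroup.mem_centralizer_iff.mp hg s rfl
    rw [MonoidHom.mem_ker, omegaMap, map_commutatorElement, hπ, hπ,
      commutatorElement_eq_one_iff_commute]
    exact (Commute.eq hcomm).symm
  refine ⟨part1, ?_, ?_⟩
  · -- part 2: homomorphism property
    intro g hg h hh
    have hgh : π (Function.surjInv hsurj g * Function.surjInv hsurj h)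
        = π (Function.surjInv hsurj (g * h)) := by
      rw [map_mul, hπ, hπ, hπ]
    set a := Function.surjInv hsurj g with ha
    set b := Function.surjInv hsurj h with hb
    set c := Function.surjInv hsurj s with hc
    have hcen : ⁅b, c⁆ ∈ Subgroup.center G' := hker (part1 h hh)
    have hcen' : ⁅a, c⁆ ∈ Subgroup.center G' := hker (part1 g hg)
    calc omegaMap π hsurj (g * h) s = ⁅a * b, c⁆ :=
          lift_indep π hker hgh.symm rfl
      _ = a * ⁅b, c⁆ * a⁻¹ * ⁅a, c⁆ := by group
      _ = ⁅b, c⁆ * ⁅a, c⁆ := by rw [cc _ hcen a]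
      _ = ⁅a, c⁆ * ⁅b, c⁆ := Subgroup.mem_center_iff.mp hcen' _
      _ = omegaMap π hsurj g s * omegaMap π hsurj h s := rfl
  · -- part 3: kernel description
    ext g
    simp only [Set.mem_setOf_eq, Subgroup.coe_map, Set.mem_image, SetLike.mem_coe]
    constructor
    · rintro ⟨hg, h1⟩
      refine ⟨Function.surjInv hsurj g, ?_, hπ g⟩
      rw [Subgroup.mem_centralizer_iff]
      intro x hx
      rw [Set.mem_singleton_iff] at hx
      rw [hx]
      have : ⁅Function.surjInv hsurj g, s'⁆ = 1 := by
        have e : ⁅Function.surjInv hsurj g, s'⁆ = omegaMap π hsurj g s :=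
          lift_indep π hker rfl (hs'.trans (hπ s).symm)
        rw [e, h1]
      exact (commutatorElement_eq_one_iff_commute.mp this).eq.symm
    · rintro ⟨g'', hg'', rfl⟩
      have hcomm : s' * g'' = g'' * s' := Subgroup.mem_centralizer_iff.mp hg'' s' rfl
      constructor
      · rw [Subgroup.mem_centralizer_iff]
        intro x hx
        rw [Set.mem_singleton_iff] at hx
        rw [hx, ← hs', ← map_mul, hcomm, map_mul]
      · rw [show omegaMap π hsurj (π g'') s = ⁅g'', s'⁆ from
          lift_indep π hker (hπ _) (by rw [hs', hπ]),
          commutatorElement_eq_one_iff_commute]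
        exact (Commute.eq hcomm).symm
end

section
/- The image of the homomorphism ω_s : C_G(s) → ker π equals the set {z ∈ ker π | s'·z is conjugate to s' in G'}. -/
open scoped commutatorElement

lemma conj_center {G : Type*} [Group G] {u : G} (hu : u ∈ Subgroup.center G) (x : G) :
    u * x * u⁻¹ = x := by
  rw [← Subgroup.mem_center_iff.mp hu x, mul_inv_cancel_right]

lemma comm_left_center {G : Type*} [Group G] {u : G} (hu : u ∈ Subgroup.center G)
    (c d : G) : ⁅u * c, d⁆ = ⁅c, d⁆ := by
  have h := Subgroup.mem_center_iff.mp ((Subgroup.center G).inv_mem hu)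
  simp only [commutatorElement_def, mul_inv_rev]
  calc u * c * d * (c⁻¹ * u⁻¹) * d⁻¹
      = u * (c * d * c⁻¹) * (u⁻¹ * d⁻¹) := by group
    _ = u * (c * d * c⁻¹) * (d⁻¹ * u⁻¹) := by rw [← h d⁻¹]
    _ = u * (c * d * c⁻¹ * d⁻¹) * u⁻¹ := by group
    _ = c * d * c⁻¹ * d⁻¹ := conj_center hu _

lemma comm_right_center {G : Type*} [Group G] {v : G} (hv : v ∈ Subgroup.center G)
    (c d : G) : ⁅c, v * d⁆ = ⁅c, d⁆ := by
  simp only [commutatorElement_def, mul_inv_rev]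
  calc c * (v * d) * c⁻¹ * (d⁻¹ * v⁻¹)
      = (c * v) * (d * c⁻¹ * d⁻¹) * v⁻¹ := by group
    _ = (v * c) * (d * c⁻¹ * d⁻¹) * v⁻¹ := by
        rw [Subgroup.mem_center_iff.mp hv c]
    _ = v * (c * d * c⁻¹ * d⁻¹) * v⁻¹ := by group
    _ = c * d * c⁻¹ * d⁻¹ := conj_center hv _

lemma commutator_lift_indep {G' G : Type*} [Group G'] [Group G] {π : G' →* G}
    (hker : π.ker ≤ Subgroup.center G') {a b c d : G'}
    (h1 : π a = π c) (h2 : π b = π d) : ⁅a, b⁆ = ⁅c, d⁆ := by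
  have hu : a * c⁻¹ ∈ Subgroup.center G' := hker (by simp [MonoidHom.mem_ker, h1])
  have hv : b * d⁻¹ ∈ Subgroup.center G' := hker (by simp [MonoidHom.mem_ker, h2])
  have ha : a = (a * c⁻¹) * c := by group
  have hb : b = (b * d⁻¹) * d := by group
  rw [ha, hb, comm_left_center hu, comm_right_center hv]


/-- The image of the homomorphism `ω_s : C_G(s) → ker π` equals the set
`{z ∈ ker π | s'·z is conjugate to s' in G'}`. -/
theorem omega_s_image
    {G' G : Type*} [Group G'] [Group G] (π : G' →* G)
    (hsurj : Function.Surjective π) (hker : π.ker ≤ Subgroup.center G')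
    (s : G) (s' : G') (hs' : π s' = s) :
    ∀ z : G', (z ∈ π.ker ∧ IsConj (s' * z) s') ↔
      ∃ g ∈ Subgroup.centralizer {s}, omegaMap π hsurj g s = z := by
  intro z
  have hπg : ∀ x : G, π (Function.surjInv hsurj x) = x := fun x =>
    Function.surjInv_eq hsurj x
  constructor
  · rintro ⟨hz, hconj⟩
    obtain ⟨c, hc⟩ := isConj_iff.mp hconj
    -- hc : c * (s' * z) * c⁻¹ = s'
    have hzc : z ∈ Subgroup.center G' := hker hz
    have hzc' := Subgroup.mem_center_iff.mp hzc
    have hπz : π z = (1 : G) := hz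
    have hcs : π c * s = s * π c := by
      have := congrArg π hc
      simp only [map_mul, map_inv, hπz, hs', mul_one] at this
      rw [mul_inv_eq_iff_eq_mul] at this
      exact this
    refine ⟨(π c)⁻¹, ?_, ?_⟩
    · rw [Subgroup.mem_centralizer_iff]
      rintro h ⟨rfl⟩
      exact (Commute.inv_left (a := π c) (b := s) hcs).eq.symm
    · have h1 : c⁻¹ * s' * c = s' * z := by
        conv_lhs => rw [← hc]
        group
      have key : ⁅c⁻¹, s'⁆ = z := by
        calc ⁅c⁻¹, s'⁆ = c⁻¹ * s' * c * s'⁻¹ := by group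
          _ = s' * z * s'⁻¹ := by rw [h1]
          _ = z * s' * s'⁻¹ := by rw [← hzc' s']
          _ = z := by group
      rw [omegaMap, commutator_lift_indep hker (c := c⁻¹) (d := s')
        (by simp [hπg]) (by rw [hπg, hs']), key]
  · rintro ⟨g, hg, rfl⟩
    have hgs : s * g = g * s := Subgroup.mem_centralizer_iff.mp hg s rfl
    have hzker : omegaMap π hsurj g s ∈ π.ker := by
      rw [MonoidHom.mem_ker, omegaMap]
      simp only [commutatorElement_def, map_mul, map_inv, hπg]
      rw [← hgs]
      group
    refine ⟨hzker, ?_⟩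
    have hz := hker hzker
    have heq : omegaMap π hsurj g s = ⁅Function.surjInv hsurj g, s'⁆ :=
      commutator_lift_indep hker rfl (by rw [hπg, hs'])
    set g₁ := Function.surjInv hsurj g
    rw [isConj_iff]
    refine ⟨g₁⁻¹, ?_⟩
    calc g₁⁻¹ * (s' * omegaMap π hsurj g s) * g₁⁻¹⁻¹
        = g₁⁻¹ * (omegaMap π hsurj g s * s') * g₁ := by
          rw [← Subgroup.mem_center_iff.mp hz s']; group
      _ = g₁⁻¹ * (⁅g₁, s'⁆ * s') * g₁ := by rw [heq]
      _ = s' := by group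
end

section
/- The subgroup π(C_{G'}(s')) is a normal subgroup of C_G(s), and the quotient group C_G(s)/π(C_{G'}(s')) is isomorphic to a subgroup of ker π; in particular this quotient is abelian, and if ker π is finite then C_G(s)/π(C_{G'}(s')) is a finite abelian group whose order divides the order of ker π. -/
/-!
For `x ∈ C_G(s)` with lift `x₁`, the commutator `⁅x₁, s'⁆` lies in `ker π`, and centrality of
`ker π` makes `x₁ ↦ ⁅x₁, s'⁆` multiplicative on `π⁻¹(C_G(s))` and trivial on `ker π`. It therefore
descends to a homomorphism `C_G(s) →* ker π`, `x ↦ ω(x, s)`, whose kernel consists of the `x`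
having a lift that commutes with `s'`, i.e. `π(C_{G'}(s')) ∩ C_G(s)`. The quotient embeds in
`ker π`, which is abelian, being central.
-/

open Subgroup
open scoped commutatorElement

theorem commutatorElement_mul_left_of_mem_center {G : Type*} [Group G] {a b c : G}
    (h : ⁅b, c⁆ ∈ center G) : ⁅a * b, c⁆ = ⁅a, c⁆ * ⁅b, c⁆ := by
  rw [commutatorElement_mul_left_eq_conj_mul, mem_center_iff.mp h a, mul_inv_cancel_right,
    mem_center_iff.mp h]

namespace MonoidHom

variable {G' G : Type*} [Group G'] [Group G] (π : G' →* G)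

theorem map_subgroupComap_subgroupOf (H : Subgroup G) (K : Subgroup G') :
    (K.subgroupOf (H.comap π)).map (π.subgroupComap H) = (K.map π).subgroupOf H := by
  ext y
  simp only [mem_map, mem_subgroupOf]
  constructor
  · rintro ⟨x, hx, rfl⟩
    exact ⟨x, hx, rfl⟩
  · rintro ⟨x, hx, hxy⟩
    exact ⟨⟨x, show π x ∈ H from hxy ▸ y.2⟩, hx, Subtype.ext hxy⟩

theorem commutatorElement_mem_ker {s' x : G'} (hx : x ∈ (centralizer {π s'}).comap π) :
    ⁅x, s'⁆ ∈ π.ker := by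
  rw [mem_ker, map_commutatorElement, commutatorElement_eq_one_iff_mul_comm]
  exact mem_centralizer_singleton_iff.mp hx

variable (hker : π.ker ≤ center G') (s' : G')

def centralizerCommutatorHom : (centralizer {π s'}).comap π →* π.ker where
  toFun x := ⟨⁅(x : G'), s'⁆, π.commutatorElement_mem_ker x.2⟩
  map_one' := Subtype.ext (commutatorElement_one_left s')
  map_mul' _ y := Subtype.ext <|
    commutatorElement_mul_left_of_mem_center (hker (π.commutatorElement_mem_ker y.2))

theorem ker_centralizerCommutatorHom :
    (π.centralizerCommutatorHom hker s').ker =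
      (centralizer {s'}).subgroupOf ((centralizer {π s'}).comap π) := by
  ext x
  rw [mem_ker, mem_subgroupOf, mem_centralizer_singleton_iff, ← Subtype.coe_inj]
  exact commutatorElement_eq_one_iff_mul_comm

theorem ker_subgroupComap_le_ker_centralizerCommutatorHom :
    (π.subgroupComap (centralizer {π s'})).ker ≤ (π.centralizerCommutatorHom hker s').ker := by
  intro x hx
  rw [π.ker_centralizerCommutatorHom hker s', mem_subgroupOf, mem_centralizer_singleton_iff]
  exact (mem_center_iff.mp (hker (Subtype.ext_iff.mp hx)) s').symm

variable (hsurj : Function.Surjective π)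

noncomputable def centralizerKerHom : centralizer {π s'} →* π.ker :=
  (π.subgroupComap _).liftOfSurjective (π.subgroupComap_surjective_of_surjective _ hsurj)
    ⟨π.centralizerCommutatorHom hker s',
      π.ker_subgroupComap_le_ker_centralizerCommutatorHom hker s'⟩

theorem ker_centralizerKerHom :
    (π.centralizerKerHom hker s' hsurj).ker =
      ((centralizer {s'}).map π).subgroupOf (centralizer {π s'}) := by
  have hρ := π.subgroupComap_surjective_of_surjective (centralizer {π s'}) hsurj
  rw [← map_comap_eq_self_of_surjective hρ (ker _), comap_ker, centralizerKerHom,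
    liftOfRightInverse_comp, ker_centralizerCommutatorHom, map_subgroupComap_subgroupOf]

end MonoidHom

/-- The subgroup `π(C_{G'}(s'))` is normal in `C_G(s)`, and the quotient
`C_G(s)/π(C_{G'}(s'))` is isomorphic to a subgroup of `ker π`; in particular this quotient is
abelian, and if `ker π` is finite then it is a finite abelian group whose order divides the
order of `ker π`. -/
theorem quotient_centralizer_embeds_in_ker
    {G' G : Type*} [Group G'] [Group G] (π : G' →* G)
    (hsurj : Function.Surjective π) (hker : π.ker ≤ Subgroup.center G')
    (s : G) (s' : G') (hs' : π s' = s)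
    (N : Subgroup ↥(Subgroup.centralizer {s}))
    (hN : N = ((Subgroup.centralizer {s'}).map π).subgroupOf (Subgroup.centralizer {s})) :
    N.Normal ∧
    ∀ (_inst : N.Normal),
      (∃ f : (↥(Subgroup.centralizer {s}) ⧸ N) →* ↥π.ker, Function.Injective f) ∧
      (∀ a b : ↥(Subgroup.centralizer {s}) ⧸ N, a * b = b * a) ∧
      (Finite ↥π.ker →
        (Finite (↥(Subgroup.centralizer {s}) ⧸ N) ∧
          Nat.card (↥(Subgroup.centralizer {s}) ⧸ N) ∣ Nat.card ↥π.ker)) := by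
  subst hs'
  set f := π.centralizerKerHom hker s' hsurj
  obtain rfl : N = f.ker := hN.trans (π.ker_centralizerKerHom hker s' hsurj).symm
  have hf := QuotientGroup.kerLift_injective f
  refine ⟨f.normal_ker, fun _ => ⟨⟨_, hf⟩, fun a b => hf ?_, fun _ => ?_⟩⟩
  · rw [map_mul, map_mul]
    exact Subtype.ext (mem_center_iff.mp (hker (QuotientGroup.kerLift f b).2) _)
  · exact ⟨Finite.of_injective _ hf, Subgroup.card_dvd_of_injective _ hf⟩
end

section
/- Let n ≥ 1 be an integer such that s'^n lies in the centre of G'. Then for every g ∈ C_G(s), the element g^n lies in π(C_{G'}(s')). (This is the key step showing that the exponent of the component group A(s) divides the order of the image of s in the adjoint group.) -/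
/-!
Lift `g` to `g'`. The commutator `z = ⁅g', s'⁆` maps to `⁅g, s⁆ = 1`, so it is central; with a
central commutator, `⁅-, -⁆` is multiplicative in each variable, whence
`⁅g'ⁿ, s'⁆ = zⁿ = ⁅g', s'ⁿ⁆ = 1` because `s'ⁿ` is central. So `g'ⁿ ∈ C_{G'}(s')` lifts `gⁿ`.
-/

open scoped commutatorElement

section CentralCommutator

variable {G : Type*} [Group G] {a b : G}

theorem commutatorElement_pow_left_of_mem_center (h : ⁅a, b⁆ ∈ Subgroup.center G) (n : ℕ) :
    ⁅a ^ n, b⁆ = ⁅a, b⁆ ^ n := by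
  induction n with
  | zero => simp
  | succ n ih =>
    have hn := Subgroup.mem_center_iff.mp (Subgroup.pow_mem _ h n) a
    rw [pow_succ', commutatorElement_mul_left_eq_conj_mul, ih, hn, mul_inv_cancel_right,
      ← pow_succ]

theorem commutatorElement_pow_right_of_mem_center (h : ⁅a, b⁆ ∈ Subgroup.center G) (n : ℕ) :
    ⁅a, b ^ n⁆ = ⁅a, b⁆ ^ n := by
  induction n with
  | zero => simp
  | succ n ih =>
    have hn := Subgroup.mem_center_iff.mp (Subgroup.pow_mem _ h n) b
    rw [pow_succ', commutatorElement_mul_right_eq_mul_conj, ih, mul_assoc _ b, hn,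
      ← mul_assoc, mul_inv_cancel_right, ← pow_succ']

theorem Commute.pow_left_of_commutatorElement_mem_center (h : ⁅a, b⁆ ∈ Subgroup.center G)
    {n : ℕ} (hn : Commute a (b ^ n)) : Commute (a ^ n) b := by
  rw [← commutatorElement_eq_one_iff_commute] at hn ⊢
  rwa [commutatorElement_pow_left_of_mem_center h, ← commutatorElement_pow_right_of_mem_center h]

end CentralCommutator

theorem pow_mem_image_centralizer_general
    {G' G : Type*} [Group G'] [Group G] (π : G' →* G)
    (hsurj : Function.Surjective π) (hker : π.ker ≤ Subgroup.center G')
    (s : G) (s' : G') (hs' : π s' = s)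
    (n : ℕ) (hc : s' ^ n ∈ Subgroup.center G') :
    ∀ g ∈ Subgroup.centralizer {s}, g ^ n ∈ (Subgroup.centralizer {s'}).map π := by
  intro g hg
  obtain ⟨g', rfl⟩ := hsurj g
  have hz : ⁅g', s'⁆ ∈ Subgroup.center G' := hker <| by
    rw [MonoidHom.mem_ker, map_commutatorElement, hs', commutatorElement_eq_one_iff_mul_comm]
    exact Subgroup.mem_centralizer_singleton_iff.mp hg
  have hg's' : Commute g' (s' ^ n) := Subgroup.mem_center_iff.mp hc g'
  exact ⟨g' ^ n, Subgroup.mem_centralizer_singleton_iff.mpr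
    (hg's'.pow_left_of_commutatorElement_mem_center hz), map_pow π g' n⟩

/-- Let `π : G' → G` be surjective with central kernel, `s ∈ G` and
`s' ∈ G'` a lift of `s`. If `n ≥ 1` is such that `s'^n` is central in `G'`, then for every
`g ∈ C_G(s)` the element `g^n` lies in `π(C_{G'}(s'))`. -/
theorem pow_mem_image_centralizer
    {G' G : Type*} [Group G'] [Group G] (π : G' →* G)
    (hsurj : Function.Surjective π) (hker : π.ker ≤ Subgroup.center G')
    (s : G) (s' : G') (hs' : π s' = s)
    (n : ℕ) (hn : 1 ≤ n) (hc : s' ^ n ∈ Subgroup.center G') :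
    ∀ g ∈ Subgroup.centralizer {s}, g ^ n ∈ (Subgroup.centralizer {s'}).map π :=
  pow_mem_image_centralizer_general π hsurj hker s s' hs' n hc
end

section
/- Let e ≥ 1 be an integer such that ω_s(g)^e = 1 for every g ∈ C_G(s) (for instance, e the exponent of the image of ω_s). Then C_G(s) is contained in π(C_{G'}(s'^e)), the image under π of the centralizer in G' of s'^e. -/
open scoped commutatorElement

/-- Let `e ≥ 1` be an integer such that `ω_s(g)^e = 1` for every
`g ∈ C_G(s)`. Then `C_G(s)` is contained in `π(C_{G'}(s'^e))`. -/
theorem centralizer_le_image_centralizer_pow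
    {G' G : Type*} [Group G'] [Group G] (π : G' →* G)
    (hsurj : Function.Surjective π) (hker : π.ker ≤ Subgroup.center G')
    (s : G) (s' : G') (hs' : π s' = s)
    (e : ℕ) (he : 1 ≤ e)
    (homega : ∀ g ∈ Subgroup.centralizer {s}, (omegaMap π hsurj g s) ^ e = 1) :
    Subgroup.centralizer {s} ≤ (Subgroup.centralizer {s' ^ e}).map π := by
  intro g hg
  set g' := Function.surjInv hsurj g with hg'def
  set s₀ := Function.surjInv hsurj s with hs₀def
  have hπg : π g' = g := Function.surjInv_eq hsurj g
  have hπs₀ : π s₀ = s := Function.surjInv_eq hsurj s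
  have hgs : s * g = g * s := by
    rw [Subgroup.mem_centralizer_iff] at hg
    exact hg s rfl
  -- z := s' * s₀⁻¹ is central
  have hz : ∀ a : G', (s' * s₀⁻¹) * a = a * (s' * s₀⁻¹) := by
    have : s' * s₀⁻¹ ∈ Subgroup.center G' := by
      apply hker
      simp [MonoidHom.mem_ker, hs', hπs₀]
    intro a
    exact (Subgroup.mem_center_iff.mp this a).symm
  -- the commutator c := ⁅g', s'⁆ equals ⁅g', s₀⁆
  have hcomm : ⁅g', s'⁆ = ⁅g', s₀⁆ := by
    have hs'eq : s' = (s' * s₀⁻¹) * s₀ := by group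
    calc ⁅g', s'⁆ = g' * s' * g'⁻¹ * s'⁻¹ := rfl
      _ = g' * ((s' * s₀⁻¹) * s₀) * g'⁻¹ * ((s' * s₀⁻¹) * s₀)⁻¹ := by rw [← hs'eq]
      _ = g' * ((s' * s₀⁻¹) * s₀) * g'⁻¹ * (s₀⁻¹ * (s' * s₀⁻¹)⁻¹) := by
          rw [mul_inv_rev]
      _ = (s' * s₀⁻¹) * (g' * s₀ * g'⁻¹ * s₀⁻¹) * (s' * s₀⁻¹)⁻¹ := by
          rw [← mul_assoc g' (s' * s₀⁻¹) s₀, ← hz g']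
          group
      _ = (g' * s₀ * g'⁻¹ * s₀⁻¹) * (s' * s₀⁻¹) * (s' * s₀⁻¹)⁻¹ := by
          rw [hz]
      _ = ⁅g', s₀⁆ := by group
  have hc1 : ⁅g', s'⁆ ^ e = 1 := by
    rw [hcomm]
    exact homega g hg
  -- c is central
  have hcc : ∀ a : G', ⁅g', s'⁆ * a = a * ⁅g', s'⁆ := by
    have : ⁅g', s'⁆ ∈ Subgroup.center G' := by
      apply hker
      simp only [MonoidHom.mem_ker, map_commutatorElement, hπg, hs']
      rw [commutatorElement_eq_one_iff_mul_comm]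
      exact hgs.symm
    intro a
    exact (Subgroup.mem_center_iff.mp this a).symm
  -- key: g' * s'^n = c^n * s'^n * g'
  have hkey : ∀ n : ℕ, g' * s' ^ n = ⁅g', s'⁆ ^ n * s' ^ n * g' := by
    intro n
    induction n with
    | zero => simp
    | succ n ih =>
      have hstep : g' * s' = ⁅g', s'⁆ * s' * g' := by group
      calc g' * s' ^ (n + 1) = (g' * s' ^ n) * s' := by rw [pow_succ, mul_assoc]
        _ = ⁅g', s'⁆ ^ n * s' ^ n * (g' * s') := by rw [ih]; group
        _ = ⁅g', s'⁆ ^ n * s' ^ n * (⁅g', s'⁆ * s' * g') := by rw [hstep]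
        _ = ⁅g', s'⁆ ^ n * (s' ^ n * ⁅g', s'⁆) * (s' * g') := by group
        _ = ⁅g', s'⁆ ^ n * (⁅g', s'⁆ * s' ^ n) * (s' * g') := by rw [← hcc]
        _ = ⁅g', s'⁆ ^ (n + 1) * s' ^ (n + 1) * g' := by
            rw [pow_succ, pow_succ']; group
  refine ⟨g', ?_, hπg⟩
  rw [SetLike.mem_coe, Subgroup.mem_centralizer_iff]
  intro h hh
  rw [Set.mem_singleton_iff] at hh
  subst hh
  have := hkey e
  rw [hc1, one_mul] at this
  rw [← this]
end

section
/- Let λ ∈ C. Then I_λ is a base of the root subsystem Φ(λ): the set I_λ is linearly independent in V*, and every root α ∈ Φ(λ) can be written as α = Σ_{β ∈ I_λ} c_β·β with integer coefficients c_β that are either all ≥ 0 or all ≤ 0. -/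
open Module

/-- A reduced, irreducible, crystallographic root system `Φ` inside the dual of a
`ℚ`-vector space `V`: each root `α` has a coroot `α∨ ∈ V` with `⟨α, α∨⟩ = 2`, pairings
between roots and coroots are integers, the dual reflections permute the roots, the
system is reduced, the roots span `V*`, and the system is irreducible. -/
structure RootSystemData (V : Type*) [AddCommGroup V] [Module ℚ V] where
  Φ : Set (Module.Dual ℚ V)
  coroot : Module.Dual ℚ V → V
  finite : Φ.Finite
  span_eq_top : Submodule.span ℚ Φ = ⊤
  pairing_self : ∀ α ∈ Φ, α (coroot α) = 2
  pairing_int : ∀ α ∈ Φ, ∀ β ∈ Φ, ∃ n : ℤ, (n : ℚ) = β (coroot α)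
  reduced : ∀ α ∈ Φ, ∀ c : ℚ, c • α ∈ Φ → c = 1 ∨ c = -1
  dual_refl_mem : ∀ α ∈ Φ, ∀ β ∈ Φ, β - β (coroot α) • α ∈ Φ
  irreducible : ∀ s : Set (Module.Dual ℚ V), s ⊆ Φ → s.Nonempty →
      (∀ α ∈ s, ∀ β ∈ Φ, β ∉ s → β (coroot α) = 0) → s = Φ

variable {V : Type*} [AddCommGroup V] [Module ℚ V]

/-- The reflections `s_α : v ↦ v - ⟨α, v⟩ α∨` attached to the elements `α` of `S`. -/
def reflSet (R : RootSystemData V) (S : Set (Module.Dual ℚ V)) : Set (V ≃ₗ[ℚ] V) :=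
  {w | ∃ α ∈ S, ∀ v, w v = v - α v • R.coroot α}

/-- The subgroup of `GL(V)` generated by the reflections `s_α`, `α ∈ S`. -/
def weylOf (R : RootSystemData V) (S : Set (Module.Dual ℚ V)) : Subgroup (V ≃ₗ[ℚ] V) :=
  Subgroup.closure (reflSet R S)

/-- The Weyl group `W` of the root system. -/
def weyl (R : RootSystemData V) : Subgroup (V ≃ₗ[ℚ] V) :=
  weylOf R R.Φ

/-- The contragredient action of `w ∈ GL(V)` on the dual space: `β ↦ β ∘ w⁻¹`. -/
def dact (w : V ≃ₗ[ℚ] V) (β : Module.Dual ℚ V) : Module.Dual ℚ V :=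
  β.comp (w.symm.toLinearMap)

/-- The coroot lattice `Q∨`. -/
def corootLattice (R : RootSystemData V) : AddSubgroup V :=
  AddSubgroup.closure (R.coroot '' R.Φ)

/-- The coweight lattice `P∨ = {v ∈ V | ⟨α, v⟩ ∈ ℤ for all α ∈ Φ}`, as a set. -/
def coweightSet (R : RootSystemData V) : Set V :=
  {v | ∀ α ∈ R.Φ, ∃ n : ℤ, (n : ℚ) = α v}

/-- `m_α`: equal to `-1` on `α₀ = -α̃` and `0` elsewhere (in particular on `Δ`). -/
noncomputable def mfun (αt α : Module.Dual ℚ V) : ℚ := by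
  classical exact if α = -αt then -1 else 0

/-- The extended (affine) base `Δ̃ = Δ ∪ {-α̃}`. -/
def extBase (Δ : Finset (Module.Dual ℚ V)) (αt : Module.Dual ℚ V) :
    Set (Module.Dual ℚ V) :=
  insert (-αt) (Δ : Set (Module.Dual ℚ V))

/-- The closed fundamental alcove `C = {λ ∈ V | ⟨α, λ⟩ ≥ m_α for all α ∈ Δ̃}`. -/
def alcove (Δ : Finset (Module.Dual ℚ V)) (αt : Module.Dual ℚ V) : Set V :=
  {x | ∀ α ∈ extBase Δ αt, mfun αt α ≤ α x}

/-- `Φ(λ) = {α ∈ Φ | ⟨α, λ⟩ ∈ ℤ}`. -/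
def PhiOf (R : RootSystemData V) (x : V) : Set (Module.Dual ℚ V) :=
  {α | α ∈ R.Φ ∧ ∃ k : ℤ, (k : ℚ) = α x}

/-- `I_λ = {α ∈ Δ̃ | ⟨α, λ⟩ = m_α}` for `λ ∈ C`. -/
def IOf (Δ : Finset (Module.Dual ℚ V)) (αt : Module.Dual ℚ V) (x : V) :
    Set (Module.Dual ℚ V) :=
  {α | α ∈ extBase Δ αt ∧ α x = mfun αt α}

/-- `W°(λ)`: the subgroup of `W` generated by the reflections `s_α`, `α ∈ Φ(λ)`. -/
def Wcirc (R : RootSystemData V) (x : V) : Subgroup (V ≃ₗ[ℚ] V) :=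
  weylOf R (PhiOf R x)

/-- `𝒜 = {z ∈ W | z(Δ̃) = Δ̃}`: automorphisms of the affine Dynkin diagram induced by `W`. -/
def AutTilde (R : RootSystemData V) (Δ : Finset (Module.Dual ℚ V))
    (αt : Module.Dual ℚ V) : Set (V ≃ₗ[ℚ] V) :=
  {z | z ∈ weyl R ∧ dact z '' extBase Δ αt = extBase Δ αt}

/-- `𝒜_L = {z ∈ 𝒜 | ϖ∨(z) ∈ L}`, where `ϖ∨(z)` is the unique `v` with `z(C) + v = C`. -/
def AutTildeL (R : RootSystemData V) (Δ : Finset (Module.Dual ℚ V))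
    (αt : Module.Dual ℚ V) (L : AddSubgroup V) : Set (V ≃ₗ[ℚ] V) :=
  {z | z ∈ AutTilde R Δ αt ∧
    ∃ v ∈ L, (fun x => z x + v) '' alcove Δ αt = alcove Δ αt}

/-- The submodule of vectors of `V` fixed by every element of `S`. -/
def fixedSub (S : Set (V ≃ₗ[ℚ] V)) : Submodule ℚ V where
  carrier := {v | ∀ w ∈ S, w v = v}
  add_mem' := by
    intro a b ha hb w hw
    rw [map_add, ha w hw, hb w hw]
  zero_mem' := by
    intro w hw
    exact map_zero w
  smul_mem' := by
    intro c v hv w hw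
    rw [map_smul, hv w hw]

/-- The set of orbits of a subgroup `A ≤ GL(V)` acting (contragrediently) on a set `S`
of linear forms. -/
def orbitsOn (A : Subgroup (V ≃ₗ[ℚ] V)) (S : Set (Module.Dual ℚ V)) :
    Set (Set (Module.Dual ℚ V)) :=
  {O | ∃ α ∈ S, O = {β | ∃ z ∈ A, dact z α = β}}

/-- `λ_Ω = (1/(n_Ω·|Ω|))·Σ_{α∈Ω} ϖ_α∨` (written with `n_α` in place of the constant value
`n_Ω` of `n` on `Ω`). -/
noncomputable def lamOf (n : Module.Dual ℚ V → ℕ) (ϖ : Module.Dual ℚ V → V)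
    (Ω : Set (Module.Dual ℚ V)) : V :=
  ∑ᶠ α ∈ Ω, ((n α : ℚ) * (Ω.ncard : ℚ))⁻¹ • ϖ α

/-- `λ` is quasi-isolated with respect to `L` if the only vector fixed by every element of
`W_L(λ) = {w ∈ W | w(λ) - λ ∈ L}` is `0`. -/
def IsQuasiIsolated (R : RootSystemData V) (L : AddSubgroup V) (x : V) : Prop :=
  fixedSub {w : V ≃ₗ[ℚ] V | w ∈ weyl R ∧ w x - x ∈ L} = ⊥

/-- `𝒬_L`: the set of nonempty subsets `Ω ⊆ Δ̃` whose stabilizer in `𝒜_L` acts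
transitively on `Ω`. -/
def QSetOf (R : RootSystemData V) (Δ : Finset (Module.Dual ℚ V))
    (αt : Module.Dual ℚ V) (L : AddSubgroup V) : Set (Set (Module.Dual ℚ V)) :=
  {Ω | Ω ⊆ extBase Δ αt ∧ Ω.Nonempty ∧
    ∀ α ∈ Ω, ∀ β ∈ Ω, ∃ z ∈ AutTildeL R Δ αt L, dact z '' Ω = Ω ∧ dact z α = β}


section Helper

variable {V : Type*} [AddCommGroup V] [Module ℚ V]

lemma evalSumQ (c : Module.Dual ℚ V →₀ ℚ) (x : V) :
    (c.sum fun β k => k • β) x = ∑ β ∈ c.support, c β * β x := by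
  simp [Finsupp.sum, LinearMap.smul_apply, smul_eq_mul]

lemma evalSumZ (c : Module.Dual ℚ V →₀ ℤ) (x : V) :
    (c.sum fun β k => (k : ℚ) • β) x = ∑ β ∈ c.support, (c β : ℚ) * β x := by
  simp [Finsupp.sum, LinearMap.smul_apply, smul_eq_mul]

lemma sumZ_sub (c d : Module.Dual ℚ V →₀ ℤ) :
    ((c - d).sum fun β k => (k : ℚ) • β)
      = (c.sum fun β k => (k : ℚ) • β) - (d.sum fun β k => (k : ℚ) • β) := by
  apply Finsupp.sum_sub_index
  intro a b₁ b₂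
  push_cast
  rw [sub_smul]

lemma sumZ_neg (c : Module.Dual ℚ V →₀ ℤ) :
    ((-c).sum fun β k => (k : ℚ) • β) = -(c.sum fun β k => (k : ℚ) • β) := by
  have := sumZ_sub (0 : Module.Dual ℚ V →₀ ℤ) c
  simpa using this

lemma uniq_repr {Δ : Finset (Module.Dual ℚ V)}
    (hΔind : LinearIndependent ℚ
      (fun x : (Δ : Set (Module.Dual ℚ V)) => (x : Module.Dual ℚ V)))
    (c d : Module.Dual ℚ V →₀ ℚ)
    (hc : (c.support : Set (Module.Dual ℚ V)) ⊆ (Δ : Set (Module.Dual ℚ V)))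
    (hd : (d.support : Set (Module.Dual ℚ V)) ⊆ (Δ : Set (Module.Dual ℚ V)))
    (h : c.sum (fun β k => k • β) = d.sum (fun β k => k • β)) : c = d := by
  classical
  have hsub : ((c - d).sum fun β k => k • β) = 0 := by
    rw [Finsupp.sum_sub_index (fun a b₁ b₂ => sub_smul b₁ b₂ a), h, sub_self]
  have hmem : c - d ∈ Finsupp.supported ℚ ℚ (Δ : Set (Module.Dual ℚ V)) := by
    rw [Finsupp.mem_supported]
    refine subset_trans ?_ (Set.union_subset hc hd)
    intro a ha
    have := Finsupp.support_sub (f := c) (g := d) ha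
    simpa using this
  have h0 : (Finsupp.linearCombination ℚ id) (c - d) = 0 := by
    rw [Finsupp.linearCombination_apply]
    simpa using hsub
  have := (linearIndepOn_iff (v := id) (s := (Δ : Set (Module.Dual ℚ V)))).mp hΔind (c - d) hmem h0
  exact sub_eq_zero.mp this

end Helper

/-- For λ ∈ C, the set I_λ is a base of the root subsystem Φ(λ):
it is linearly independent in V*, and every root α ∈ Φ(λ) is an integer combination
of elements of I_λ with coefficients all ≥ 0 or all ≤ 0. -/
theorem I_lambda_is_base_of_PhiOf
    {V : Type*} [AddCommGroup V] [Module ℚ V] [FiniteDimensional ℚ V]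
    (R : RootSystemData V)
    (Δ : Finset (Module.Dual ℚ V))
    (hΔΦ : (Δ : Set (Module.Dual ℚ V)) ⊆ R.Φ)
    (hΔind : LinearIndependent ℚ
      (fun x : (Δ : Set (Module.Dual ℚ V)) => (x : Module.Dual ℚ V)))
    (hΔbase : ∀ α ∈ R.Φ, ∃ c : Module.Dual ℚ V →₀ ℤ,
        (c.support : Set (Module.Dual ℚ V)) ⊆ (Δ : Set (Module.Dual ℚ V)) ∧
        α = c.sum (fun β k => (k : ℚ) • β) ∧
        ((∀ β, 0 ≤ c β) ∨ (∀ β, c β ≤ 0)))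
    (αt : Module.Dual ℚ V) (hαtΦ : αt ∈ R.Φ)
    (hhigh : ∀ γ ∈ R.Φ, ∃ c : Module.Dual ℚ V →₀ ℚ,
        (c.support : Set (Module.Dual ℚ V)) ⊆ (Δ : Set (Module.Dual ℚ V)) ∧
        αt - γ = c.sum (fun β k => k • β) ∧ (∀ β, 0 ≤ c β))
    (hα₀ : -αt ∉ (Δ : Set (Module.Dual ℚ V)))
    (x : V) (hx : x ∈ alcove Δ αt) :
    LinearIndependent ℚ (fun a : (IOf Δ αt x) => (a : Module.Dual ℚ V)) ∧
    ∀ α ∈ PhiOf R x, ∃ c : Module.Dual ℚ V →₀ ℤ,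
      (c.support : Set (Module.Dual ℚ V)) ⊆ IOf Δ αt x ∧
      α = c.sum (fun β k => (k : ℚ) • β) ∧
      ((∀ β, 0 ≤ c β) ∨ (∀ β, c β ≤ 0)) := by
    classical
  -- basic consequences of `x ∈ C`
  have hmΔ : ∀ β ∈ (Δ : Set (Module.Dual ℚ V)), mfun αt β = (0 : ℚ) := by
    intro β hβ
    unfold mfun
    rw [if_neg]
    intro h
    exact hα₀ (h ▸ hβ)
  have hmα₀ : mfun αt (-αt) = (-1 : ℚ) := by
    unfold mfun
    rw [if_pos rfl]
  have hβx : ∀ β ∈ (Δ : Set (Module.Dual ℚ V)), 0 ≤ β x := by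
    intro β hβ
    have h := hx β (Set.mem_insert_of_mem _ hβ)
    rwa [hmΔ β hβ] at h
  have hαtx : αt x ≤ 1 := by
    have h := hx (-αt) (Set.mem_insert _ _)
    rw [hmα₀, LinearMap.neg_apply] at h
    linarith
  have hI_of : ∀ β ∈ (Δ : Set (Module.Dual ℚ V)), β x = 0 → β ∈ IOf Δ αt x := by
    intro β hβ h0
    exact ⟨Set.mem_insert_of_mem _ hβ, by rw [h0, hmΔ β hβ]⟩
  have hIα₀ : αt x = 1 → (-αt) ∈ IOf Δ αt x := by
    intro h
    exact ⟨Set.mem_insert _ _, by rw [LinearMap.neg_apply, h, hmα₀]⟩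
  -- the main claim, for roots with nonnegative coefficients
  have key : ∀ α ∈ R.Φ, (∃ k : ℤ, (k : ℚ) = α x) →
      ∀ c : Module.Dual ℚ V →₀ ℤ,
        (c.support : Set (Module.Dual ℚ V)) ⊆ (Δ : Set (Module.Dual ℚ V)) →
        α = c.sum (fun β k => (k : ℚ) • β) → (∀ β, 0 ≤ c β) →
      ∃ e : Module.Dual ℚ V →₀ ℤ,
        (e.support : Set (Module.Dual ℚ V)) ⊆ IOf Δ αt x ∧
        α = e.sum (fun β k => (k : ℚ) • β) ∧
        ((∀ β, 0 ≤ e β) ∨ (∀ β, e β ≤ 0)) := by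
    rintro α hαΦ ⟨k, hk⟩ c hcs hcsum hcpos
    have hαx : α x = ∑ β ∈ c.support, (c β : ℚ) * β x := by
      rw [hcsum, evalSumZ]
    have hterm : ∀ β ∈ c.support, 0 ≤ (c β : ℚ) * β x := by
      intro β hβ
      exact mul_nonneg (by exact_mod_cast hcpos β) (hβx β (hcs hβ))
    have hα0 : 0 ≤ α x := by
      rw [hαx]; exact Finset.sum_nonneg hterm
    obtain ⟨d, hds, hdsum, hdpos⟩ := hhigh α hαΦ
    have hdx : αt x - α x = ∑ β ∈ d.support, d β * β x := by
      have h := congrArg (fun f : Module.Dual ℚ V => f x) hdsum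
      simp only [LinearMap.sub_apply] at h
      rw [evalSumQ] at h
      exact h
    have hdterm : ∀ β ∈ d.support, 0 ≤ d β * β x := by
      intro β hβ
      exact mul_nonneg (hdpos β) (hβx β (hds hβ))
    have hle : α x ≤ αt x := by
      have h := Finset.sum_nonneg hdterm
      linarith [hdx]
    have hk01 : k = 0 ∨ k = 1 := by
      have h1 : (0 : ℤ) ≤ k := by exact_mod_cast hk ▸ hα0
      have h2 : (k : ℚ) ≤ 1 := by rw [hk]; linarith
      have h2' : k ≤ 1 := by exact_mod_cast h2
      omega
    rcases hk01 with h0 | h1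
    · -- case ⟨α, x⟩ = 0
      have hαx0 : α x = 0 := by rw [← hk, h0]; norm_num
      refine ⟨c, ?_, hcsum, Or.inl hcpos⟩
      intro β hβ
      have hβ' : β ∈ c.support := hβ
      have hsum0 : ∑ β ∈ c.support, (c β : ℚ) * β x = 0 := by
        rw [← hαx, hαx0]
      have hz : (c β : ℚ) * β x = 0 :=
        (Finset.sum_eq_zero_iff_of_nonneg hterm).mp hsum0 β hβ'
      have hcβ : (c β : ℚ) ≠ 0 := by
        exact_mod_cast Finsupp.mem_support_iff.mp hβ'
      have hβ0 : β x = 0 := by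
        rcases mul_eq_zero.mp hz with h | h
        · exact absurd h hcβ
        · exact h
      exact hI_of β (hcs hβ') hβ0
    · -- case ⟨α, x⟩ = 1
      have hαx1 : α x = 1 := by rw [← hk, h1]; norm_num
      have hαtx1 : αt x = 1 := le_antisymm hαtx (hαx1 ▸ hle)
      obtain ⟨c', hc's, hc'sum, _⟩ := hΔbase αt hαtΦ
      have hsupp_sub : (((c' - c).support : Finset (Module.Dual ℚ V)) : Set (Module.Dual ℚ V))
          ⊆ (Δ : Set (Module.Dual ℚ V)) := by
        intro β hβ
        have hβ' := Finsupp.support_sub (f := c') (g := c) (Finset.mem_coe.mp hβ)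
        rcases Finset.mem_union.mp hβ' with h | h
        · exact hc's (Finset.mem_coe.mpr h)
        · exact hcs (Finset.mem_coe.mpr h)
      set d2 : Module.Dual ℚ V →₀ ℚ := (c' - c).mapRange (Int.cast) Int.cast_zero with hd2
      have hd2s : ((d2.support : Finset (Module.Dual ℚ V)) : Set (Module.Dual ℚ V))
          ⊆ (Δ : Set (Module.Dual ℚ V)) := by
        intro β hβ
        exact hsupp_sub (Finset.mem_coe.mpr
          (Finsupp.support_mapRange (Finset.mem_coe.mp hβ)))
      have hdeq : d = d2 := by
        apply uniq_repr hΔind d d2 hds hd2s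
        have hmr : d2.sum (fun β k => k • β) = (c' - c).sum (fun β k => (k : ℚ) • β) :=
          Finsupp.sum_mapRange_index (fun β => zero_smul ℚ β)
        rw [hmr, sumZ_sub, ← hc'sum, ← hcsum, ← hdsum]
      have hdval : ∀ β, d β = ((c' - c) β : ℚ) := by
        intro β
        rw [hdeq, hd2]
        simp
      have hd_nonneg : ∀ β, 0 ≤ (c' - c) β := by
        intro β
        have h := hdpos β
        rw [hdval β] at h
        exact_mod_cast h
      set e : Module.Dual ℚ V →₀ ℤ := Finsupp.single (-αt) (-1) + (c - c') with he
      have hcat : c (-αt) = 0 := by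
        by_contra h
        exact hα₀ (hcs (Finset.mem_coe.mpr (Finsupp.mem_support_iff.mpr h)))
      have hc'at : c' (-αt) = 0 := by
        by_contra h
        exact hα₀ (hc's (Finset.mem_coe.mpr (Finsupp.mem_support_iff.mpr h)))
      have heval : ∀ β, β ≠ -αt → e β = c β - c' β := by
        intro β hβ
        rw [he]
        simp [Finsupp.single_apply, Ne.symm hβ]
      have hevalat : e (-αt) = -1 := by
        rw [he]
        simp [hcat, hc'at]
      have hsum0 : ∑ β ∈ d.support, d β * β x = 0 := by
        rw [← hdx, hαtx1, hαx1]; ring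
      refine ⟨e, ?_, ?_, Or.inr ?_⟩
      · intro β hβ
        by_cases hb : β = -αt
        · rw [hb]; exact hIα₀ hαtx1
        · have heβ : e β ≠ 0 := Finsupp.mem_support_iff.mp (Finset.mem_coe.mp hβ)
          rw [heval β hb] at heβ
          have hccβ : (c' - c) β ≠ 0 := by
            rw [Finsupp.sub_apply]
            intro h
            exact heβ (by omega)
          have hdβ : d β ≠ 0 := by
            rw [hdval β]
            exact_mod_cast hccβ
          have hβΔ : β ∈ (Δ : Set (Module.Dual ℚ V)) :=
            hsupp_sub (Finset.mem_coe.mpr (Finsupp.mem_support_iff.mpr hccβ))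
          have hβd : β ∈ d.support := Finsupp.mem_support_iff.mpr hdβ
          have hz : d β * β x = 0 :=
            (Finset.sum_eq_zero_iff_of_nonneg hdterm).mp hsum0 β hβd
          have hβ0 : β x = 0 := by
            rcases mul_eq_zero.mp hz with h | h
            · exact absurd h hdβ
            · exact h
          exact hI_of β hβΔ hβ0
      · rw [he, Finsupp.sum_add_index' (fun β => by simp)
            (fun β k₁ k₂ => by push_cast; rw [add_smul]),
          Finsupp.sum_single_index (by simp), sumZ_sub, ← hcsum, ← hc'sum]
        simp only [Int.cast_neg, Int.cast_one, neg_smul, one_smul, neg_neg]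
        abel
      · intro β
        by_cases hb : β = -αt
        · rw [hb, hevalat]; norm_num
        · rw [heval β hb]
          have h := hd_nonneg β
          rw [Finsupp.sub_apply] at h
          omega
  -- roots come in ± pairs
  have hnegΦ : ∀ α ∈ R.Φ, -α ∈ R.Φ := by
    intro α hα
    have h := R.dual_refl_mem α hα α hα
    rw [R.pairing_self α hα] at h
    have h2 : α - (2 : ℚ) • α = -α := by module
    rwa [h2] at h
  constructor
  · -- linear independence of I_λ
    by_cases hmem : (-αt) ∈ IOf Δ αt x
    · have hS : IOf Δ αt x = insert (-αt) (IOf Δ αt x \ {-αt}) := by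
        rw [Set.insert_diff_singleton, Set.insert_eq_self.mpr hmem]
      have hsub : IOf Δ αt x \ {-αt} ⊆ (Δ : Set (Module.Dual ℚ V)) := by
        rintro β ⟨⟨hβ1, _⟩, hβ2⟩
        rcases hβ1 with h | h
        · exact absurd h hβ2
        · exact h
      have hind' : LinearIndependent ℚ
          (fun b : (IOf Δ αt x \ {-αt} : Set (Module.Dual ℚ V)) => (b : Module.Dual ℚ V)) :=
        LinearIndepOn.mono (v := id) hΔind hsub
      have hx0 : ∀ β ∈ IOf Δ αt x \ {-αt}, β x = 0 := by
        rintro β hβ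
        have hβΔ := hsub hβ
        have h := hβ.1.2
        rwa [hmΔ β hβΔ] at h
      have hnotspan : (-αt) ∉ Submodule.span ℚ (IOf Δ αt x \ {-αt}) := by
        intro hsp
        rw [Submodule.mem_span_set] at hsp
        obtain ⟨f, hfs, hfsum⟩ := hsp
        have h0 : (-αt) x = 0 := by
          rw [← hfsum, evalSumQ]
          apply Finset.sum_eq_zero
          intro β hβ
          rw [hx0 β (hfs hβ), mul_zero]
        have h1 : (-αt) x = -1 := by
          rw [hmem.2, hmα₀]
        rw [h1] at h0
        norm_num at h0
      have hfin := LinearIndepOn.id_insert hind' hnotspan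
      rw [← hS] at hfin
      exact hfin
    · have hsub : IOf Δ αt x ⊆ (Δ : Set (Module.Dual ℚ V)) := by
        rintro β hβ
        rcases hβ.1 with h | h
        · exact absurd (h ▸ hβ) hmem
        · exact h
      exact LinearIndepOn.mono (v := id) hΔind hsub
  · -- every root in Φ(λ) is a signed integer combination of I_λ
    rintro α ⟨hαΦ, k, hk⟩
    obtain ⟨c, hcs, hcsum, hsign⟩ := hΔbase α hαΦ
    rcases hsign with hpos | hneg
    · exact key α hαΦ ⟨k, hk⟩ c hcs hcsum hpos
    · obtain ⟨e, he1, he2, he3⟩ := key (-α) (hnegΦ α hαΦ)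
        ⟨-k, by rw [LinearMap.neg_apply, ← hk]; push_cast; ring⟩ (-c)
        (by rw [Finsupp.support_neg]; exact hcs)
        (by rw [sumZ_neg, ← hcsum])
        (fun β => by simpa using hneg β)
      refine ⟨-e, ?_, ?_, ?_⟩
      · rw [Finsupp.support_neg]; exact he1
      · rw [sumZ_neg, ← he2, neg_neg]
      · rcases he3 with h | h
        · right; intro β; simpa using h β
        · left; intro β; simpa using h β
end

section
/- Let λ ∈ C. Then {w ∈ W | w(λ) − λ ∈ L and w(I_λ) = I_λ} = {z ∈ 𝒜 | λ − z(λ) ∈ L and z(C) + (λ − z(λ)) = C}. In particular, every element w of W with w(λ) − λ ∈ L and w(I_λ) = I_λ stabilizes Δ̃ and satisfies ϖ∨(w) = λ − w(λ). -/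
open Module

variable {V : Type*} [AddCommGroup V] [Module ℚ V]

-- ===== auxiliary development =====
namespace QI

lemma dact_apply (w : V ≃ₗ[ℚ] V) (β : Dual ℚ V) (y : V) : dact w β y = β (w.symm y) := rfl

lemma dact_mul (w w' : V ≃ₗ[ℚ] V) (β : Dual ℚ V) :
    dact (w * w') β = dact w (dact w' β) := rfl

lemma dact_one (β : Dual ℚ V) : dact 1 β = β := rfl

lemma dact_inv_dact (w : V ≃ₗ[ℚ] V) (β : Dual ℚ V) : dact w⁻¹ (dact w β) = β := by
  rw [← dact_mul, inv_mul_cancel, dact_one]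

lemma dact_dact_inv (w : V ≃ₗ[ℚ] V) (β : Dual ℚ V) : dact w (dact w⁻¹ β) = β := by
  rw [← dact_mul, mul_inv_cancel, dact_one]

lemma dact_injective (w : V ≃ₗ[ℚ] V) : Function.Injective (dact w) := by
  intro a b h
  have := congrArg (dact w⁻¹) h
  rwa [dact_inv_dact, dact_inv_dact] at this

lemma dact_add (w : V ≃ₗ[ℚ] V) (a b : Dual ℚ V) :
    dact w (a + b) = dact w a + dact w b := by
  ext y; simp [dact_apply]

lemma dact_smul (w : V ≃ₗ[ℚ] V) (c : ℚ) (a : Dual ℚ V) :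
    dact w (c • a) = c • dact w a := by
  ext y; simp [dact_apply]

lemma refl_invol (R : RootSystemData V) (α : Dual ℚ V) (hα : α ∈ R.Φ)
    (s : V ≃ₗ[ℚ] V) (hs : ∀ v, s v = v - α v • R.coroot α) : s * s = 1 := by
  ext v
  have h2 := R.pairing_self α hα
  have : s (s v) = v := by
    rw [hs, hs]
    simp only [map_sub, map_smul, h2, smul_eq_mul]
    module
  simpa using this

lemma refl_dact (R : RootSystemData V) (α : Dual ℚ V) (hα : α ∈ R.Φ)
    (s : V ≃ₗ[ℚ] V) (hs : ∀ v, s v = v - α v • R.coroot α) (β : Dual ℚ V) :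
    dact s β = β - β (R.coroot α) • α := by
  have hinv : s⁻¹ = s := by
    have := refl_invol R α hα s hs
    exact inv_eq_of_mul_eq_one_left this
  ext y
  have hsy : s.symm y = s y := by
    have : s⁻¹ y = s y := by rw [hinv]
    exact this
  rw [dact_apply, hsy, hs]
  simp only [map_sub, map_smul, smul_eq_mul, LinearMap.sub_apply, LinearMap.smul_apply,
    smul_eq_mul]
  ring

lemma weyl_dact_mem' (R : RootSystemData V) {w : V ≃ₗ[ℚ] V} (hw : w ∈ weyl R) :
    (∀ β ∈ R.Φ, dact w β ∈ R.Φ) ∧ (∀ β ∈ R.Φ, dact w⁻¹ β ∈ R.Φ) := by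
  induction hw using Subgroup.closure_induction with
  | mem s hs =>
      obtain ⟨α, hα, hsv⟩ := hs
      have hinv : s⁻¹ = s := inv_eq_of_mul_eq_one_left (refl_invol R α hα s hsv)
      constructor
      · intro β hβ
        rw [refl_dact R α hα s hsv]
        exact R.dual_refl_mem α hα β hβ
      · intro β hβ
        rw [hinv, refl_dact R α hα s hsv]
        exact R.dual_refl_mem α hα β hβ
  | one => constructor <;> intro β hβ <;> simpa [dact_one] using hβ
  | mul a b _ _ iha ihb =>
      constructor
      · intro β hβ
        rw [dact_mul]
        exact iha.1 _ (ihb.1 _ hβ)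
      · intro β hβ
        rw [mul_inv_rev, dact_mul]
        exact ihb.2 _ (iha.2 _ hβ)
  | inv a _ ih =>
      refine ⟨ih.2, ?_⟩
      intro β hβ
      rw [inv_inv]
      exact ih.1 _ hβ

lemma weyl_dact_mem (R : RootSystemData V) {w : V ≃ₗ[ℚ] V} (hw : w ∈ weyl R)
    {β : Dual ℚ V} (hβ : β ∈ R.Φ) : dact w β ∈ R.Φ :=
  (weyl_dact_mem' R hw).1 β hβ

lemma coweight_neg (R : RootSystemData V) {v : V} (hv : v ∈ coweightSet R) :
    -v ∈ coweightSet R := by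
  intro α hα
  obtain ⟨n, hn⟩ := hv α hα
  exact ⟨-n, by push_cast; rw [hn]; simp⟩

lemma weyl_coweight_mem' (R : RootSystemData V) {w : V ≃ₗ[ℚ] V} (hw : w ∈ weyl R)
    {v : V} (hv : v ∈ coweightSet R) : w v ∈ coweightSet R := by
  intro α hα
  obtain ⟨n, hn⟩ := hv (dact w⁻¹ α) ((weyl_dact_mem' R hw).2 α hα)
  refine ⟨n, ?_⟩
  rw [hn, dact_apply]
  congr 1

lemma weyl_inv_mem (R : RootSystemData V) {w : V ≃ₗ[ℚ] V} (hw : w ∈ weyl R) :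
    w⁻¹ ∈ weyl R := inv_mem hw

end QI

-- chunk 2 appended to base
namespace QI
variable {V : Type*} [AddCommGroup V] [Module ℚ V]

/-- Evaluation of an affine function (pair) at a point, as a linear map. -/
def evl (y : V) : (Dual ℚ V × ℚ) →ₗ[ℚ] ℚ where
  toFun a := a.1 y + a.2
  map_add' a b := by simp [LinearMap.add_apply]; ring
  map_smul' c a := by simp [LinearMap.smul_apply, smul_eq_mul]; ring

lemma evl_apply (y : V) (a : Dual ℚ V × ℚ) : evl y a = a.1 y + a.2 := rfl

lemma ev_eq_of (a b : Dual ℚ V × ℚ) (h : ∀ y, evl y a = evl y b) : a = b := by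
  have h2 : a.2 = b.2 := by
    have := h 0
    simpa [evl_apply] using this
  have h1 : a.1 = b.1 := by
    ext y
    have := h y
    rw [evl_apply, evl_apply, h2] at this
    linarith
  exact Prod.ext h1 h2

/-- The linear action on affine functions induced by the affine map `t : y ↦ w y + v`,
sending `a` to `a ∘ t⁻¹`. -/
def Tmap (w : V ≃ₗ[ℚ] V) (v : V) : (Dual ℚ V × ℚ) →ₗ[ℚ] (Dual ℚ V × ℚ) where
  toFun a := (dact w a.1, a.2 - dact w a.1 v)
  map_add' a b := by
    ext <;> simp [dact_add, LinearMap.add_apply] <;> ring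
  map_smul' c a := by
    ext <;> simp [dact_smul, LinearMap.smul_apply, smul_eq_mul] <;> ring

lemma Tmap_fst (w : V ≃ₗ[ℚ] V) (v : V) (a : Dual ℚ V × ℚ) :
    (Tmap w v a).1 = dact w a.1 := rfl

lemma evl_Tmap (w : V ≃ₗ[ℚ] V) (v : V) (a : Dual ℚ V × ℚ) (y : V) :
    evl y (Tmap w v a) = evl (w.symm (y - v)) a := by
  simp [evl_apply, Tmap, dact_apply, map_sub]
  ring

lemma Tmap_Tmap_inv (w : V ≃ₗ[ℚ] V) (v : V) (a : Dual ℚ V × ℚ) :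
    Tmap w v (Tmap w⁻¹ (-(w.symm v)) a) = a := by
  apply ev_eq_of
  intro y
  rw [evl_Tmap, evl_Tmap]
  have hpt : (w⁻¹ : V ≃ₗ[ℚ] V).symm (w.symm (y - v) - -(w.symm v)) = y := by
    have h : (w⁻¹ : V ≃ₗ[ℚ] V).symm = w := rfl
    rw [h]
    simp [map_sub]
  rw [hpt]

lemma Tmap_inv_Tmap (w : V ≃ₗ[ℚ] V) (v : V) (a : Dual ℚ V × ℚ) :
    Tmap w⁻¹ (-(w.symm v)) (Tmap w v a) = a := by
  apply ev_eq_of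
  intro y
  rw [evl_Tmap, evl_Tmap]
  have hpt : w.symm ((w⁻¹ : V ≃ₗ[ℚ] V).symm (y - -(w.symm v)) - v) = y := by
    have h : (w⁻¹ : V ≃ₗ[ℚ] V).symm = w := rfl
    rw [h]
    simp [map_add]
  rw [hpt]

/-- Affine roots. -/
def AR (R : RootSystemData V) : Set (Dual ℚ V × ℚ) :=
  {a | a.1 ∈ R.Φ ∧ ∃ k : ℤ, (k : ℚ) = a.2}

/-- The interior of the fundamental alcove. -/
def intAlc (Δ : Finset (Dual ℚ V)) (αt : Dual ℚ V) : Set V :=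
  {y | ∀ s ∈ extBase Δ αt, mfun αt s < s y}

/-- Affine roots positive on the interior of the alcove. -/
def Pos (R : RootSystemData V) (Δ : Finset (Dual ℚ V)) (αt : Dual ℚ V) :
    Set (Dual ℚ V × ℚ) :=
  {a | a ∈ AR R ∧ ∀ y ∈ intAlc Δ αt, 0 < evl y a}

/-- The simple affine root attached to `s ∈ Δ̃`. -/
noncomputable def Asimp (αt s : Dual ℚ V) : Dual ℚ V × ℚ := (s, -(mfun αt s))

open scoped Classical in
/-- `Δ̃` as a finset. -/
noncomputable def tDel (Δ : Finset (Dual ℚ V)) (αt : Dual ℚ V) : Finset (Dual ℚ V) :=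
  insert (-αt) Δ

lemma coe_tDel (Δ : Finset (Dual ℚ V)) (αt : Dual ℚ V) :
    (tDel Δ αt : Set (Dual ℚ V)) = extBase Δ αt := by
  simp [tDel, extBase]

lemma mem_tDel {Δ : Finset (Dual ℚ V)} {αt s : Dual ℚ V} :
    s ∈ tDel Δ αt ↔ s ∈ extBase Δ αt := by
  rw [← coe_tDel]; exact Iff.rfl

lemma mfun_neg_ht (αt : Dual ℚ V) : mfun αt (-αt) = -1 := by simp [mfun]

lemma mfun_of_mem_del {Δ : Finset (Dual ℚ V)} {αt : Dual ℚ V}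
    (hα₀ : -αt ∉ (Δ : Set (Dual ℚ V))) {s : Dual ℚ V} (hs : s ∈ Δ) :
    mfun αt s = 0 := by
  rw [mfun]
  rw [if_neg]
  intro h
  exact hα₀ (h ▸ hs)

lemma evl_Asimp (αt s : Dual ℚ V) (y : V) : evl y (Asimp αt s) = s y - mfun αt s := by
  simp [evl_apply, Asimp]; ring

lemma Asimp_injective (αt : Dual ℚ V) : Function.Injective (Asimp αt) := by
  intro a b h
  exact congrArg Prod.fst h

end QI
-- chunk 3
namespace QI
variable {V : Type*} [AddCommGroup V] [Module ℚ V]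

lemma root_ne_zero (R : RootSystemData V) {α : Dual ℚ V} (hα : α ∈ R.Φ) : α ≠ 0 := by
  intro h
  have := R.pairing_self α hα
  rw [h] at this
  simp at this

lemma neg_mem_phi (R : RootSystemData V) {α : Dual ℚ V} (hα : α ∈ R.Φ) : -α ∈ R.Φ := by
  have h := R.dual_refl_mem α hα α hα
  rw [R.pairing_self α hα] at h
  have : α - (2:ℚ) • α = -α := by module
  rwa [this] at h

lemma finsupp_to_del_int (Δ : Finset (Dual ℚ V)) (c : Dual ℚ V →₀ ℤ)
    (hsupp : (c.support : Set (Dual ℚ V)) ⊆ (Δ : Set (Dual ℚ V))) :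
    c.sum (fun β k => (k : ℚ) • β) = ∑ β ∈ Δ, (c β : ℚ) • β := by
  classical
  rw [Finsupp.sum]
  apply Finset.sum_subset
  · exact_mod_cast hsupp
  · intro β _ hβ
    rw [Finsupp.notMem_support_iff.mp hβ]
    simp

lemma finsupp_to_del_rat (Δ : Finset (Dual ℚ V)) (c : Dual ℚ V →₀ ℚ)
    (hsupp : (c.support : Set (Dual ℚ V)) ⊆ (Δ : Set (Dual ℚ V))) :
    c.sum (fun β k => k • β) = ∑ β ∈ Δ, c β • β := by
  classical
  rw [Finsupp.sum]
  apply Finset.sum_subset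
  · exact_mod_cast hsupp
  · intro β _ hβ
    rw [Finsupp.notMem_support_iff.mp hβ]
    simp

lemma sum_del_apply (Δ : Finset (Dual ℚ V)) (n : Dual ℚ V → ℚ) (y : V) :
    (∑ β ∈ Δ, n β • β) y = ∑ β ∈ Δ, n β * β y := by
  rw [LinearMap.sum_apply]
  apply Finset.sum_congr rfl
  intro β _
  simp

lemma del_coords {Δ : Finset (Dual ℚ V)}
    (hΔind : LinearIndependent ℚ
      (fun x : (Δ : Set (Dual ℚ V)) => (x : Dual ℚ V)))
    (n : Dual ℚ V → ℚ) (h : ∑ β ∈ Δ, n β • β = 0) : ∀ β ∈ Δ, n β = 0 := by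
  classical
  have key := Fintype.linearIndependent_iff.mp hΔind (fun i => n i)
  have h2 : ∑ i : (Δ : Set (Dual ℚ V)), n i • (i : Dual ℚ V) = 0 := by
    have e1 := Finset.sum_set_coe (f := fun β : Dual ℚ V => n β • β)
      (s := (Δ : Set (Dual ℚ V)))
    rw [e1, Finset.toFinset_coe]
    exact h
  intro β hβ
  exact key h2 ⟨β, hβ⟩

section FD
variable [FiniteDimensional ℚ V]

lemma exists_one_forms {Δ : Finset (Dual ℚ V)}
    (hspan : Submodule.span ℚ (Δ : Set (Dual ℚ V)) = ⊤)
    (hΔind : LinearIndependent ℚ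
      (fun x : (Δ : Set (Dual ℚ V)) => (x : Dual ℚ V))) :
    ∃ y : V, ∀ β ∈ Δ, β y = 1 := by
  classical
  let B : Basis (Δ : Set (Dual ℚ V)) ℚ (Dual ℚ V) :=
    Basis.mk hΔind (by rw [Subtype.range_coe, hspan])
  let F : Dual ℚ (Dual ℚ V) := B.constr ℚ (fun _ => (1 : ℚ))
  refine ⟨(Module.evalEquiv ℚ V).symm F, ?_⟩
  intro β hβ
  have h2 : β ((Module.evalEquiv ℚ V).symm F) = F β :=
    Module.apply_evalEquiv_symm_apply ℚ V β F
  rw [h2]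
  have hB : B ⟨β, hβ⟩ = β := by simp [B]
  have := B.constr_basis ℚ (fun _ => (1 : ℚ)) ⟨β, hβ⟩
  rw [hB] at this
  exact this

end FD
end QI
-- chunk 4
namespace QI
variable {V : Type*} [AddCommGroup V] [Module ℚ V]

section Hyps
variable (R : RootSystemData V) (Δ : Finset (Dual ℚ V)) (αt : Dual ℚ V)

/-- The highest root has nonnegative integer coordinates w.r.t. `Δ`. -/
lemma ht_coeffs
    (hΔΦ : (Δ : Set (Dual ℚ V)) ⊆ R.Φ)
    (hΔind : LinearIndependent ℚ
      (fun x : (Δ : Set (Dual ℚ V)) => (x : Dual ℚ V)))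
    (hΔbase : ∀ α ∈ R.Φ, ∃ c : Dual ℚ V →₀ ℤ,
        (c.support : Set (Dual ℚ V)) ⊆ (Δ : Set (Dual ℚ V)) ∧
        α = c.sum (fun β k => (k : ℚ) • β) ∧
        ((∀ β, 0 ≤ c β) ∨ (∀ β, c β ≤ 0)))
    (hαtΦ : αt ∈ R.Φ)
    (hhigh : ∀ γ ∈ R.Φ, ∃ c : Dual ℚ V →₀ ℚ,
        (c.support : Set (Dual ℚ V)) ⊆ (Δ : Set (Dual ℚ V)) ∧
        αt - γ = c.sum (fun β k => k • β) ∧ (∀ β, 0 ≤ c β)) :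
    ∃ d : Dual ℚ V →₀ ℤ, (d.support : Set (Dual ℚ V)) ⊆ (Δ : Set (Dual ℚ V)) ∧
      αt = ∑ β ∈ Δ, (d β : ℚ) • β ∧ (∀ β, 0 ≤ d β) := by
  classical
  obtain ⟨c, hsupp, hsum, hbr⟩ := hΔbase αt hαtΦ
  rw [finsupp_to_del_int Δ c hsupp] at hsum
  rcases hbr with hpos | hneg
  · exact ⟨c, hsupp, hsum, hpos⟩
  · exfalso
    -- Δ is nonempty
    have hΔne : Δ.Nonempty := by
      rcases Finset.eq_empty_or_nonempty Δ with h | h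
      · exfalso
        apply root_ne_zero R hαtΦ
        rw [hsum, h]
        simp
      · exact h
    obtain ⟨γ, hγ⟩ := hΔne
    obtain ⟨e, hesupp, hesum, hepos⟩ := hhigh γ (hΔΦ hγ)
    rw [finsupp_to_del_rat Δ e hesupp] at hesum
    have hγsum : γ = ∑ β ∈ Δ, (if β = γ then (1:ℚ) else 0) • β := by
      simp only [ite_smul, one_smul, zero_smul]
      rw [Finset.sum_ite_eq' Δ γ (fun β => β)]
      simp [hγ]
    have hzero : ∑ β ∈ Δ, ((c β : ℚ) - (if β = γ then (1:ℚ) else 0) - e β) • β = 0 := by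
      simp only [sub_smul]
      rw [Finset.sum_sub_distrib, Finset.sum_sub_distrib]
      rw [← hsum, ← hγsum, ← hesum]
      abel
    have := del_coords hΔind _ hzero γ hγ
    simp at this
    have h1 : (c γ : ℚ) = 1 + e γ := by linarith
    have h2 : (0:ℚ) < 1 + e γ := by linarith [hepos γ]
    have h3 : (c γ : ℚ) ≤ 0 := by exact_mod_cast hneg γ
    linarith

variable [FiniteDimensional ℚ V]

lemma intAlc_nonempty
    (hΔΦ : (Δ : Set (Dual ℚ V)) ⊆ R.Φ)
    (hΔind : LinearIndependent ℚ
      (fun x : (Δ : Set (Dual ℚ V)) => (x : Dual ℚ V)))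
    (hΔbase : ∀ α ∈ R.Φ, ∃ c : Dual ℚ V →₀ ℤ,
        (c.support : Set (Dual ℚ V)) ⊆ (Δ : Set (Dual ℚ V)) ∧
        α = c.sum (fun β k => (k : ℚ) • β) ∧
        ((∀ β, 0 ≤ c β) ∨ (∀ β, c β ≤ 0)))
    (hαtΦ : αt ∈ R.Φ)
    (hhigh : ∀ γ ∈ R.Φ, ∃ c : Dual ℚ V →₀ ℚ,
        (c.support : Set (Dual ℚ V)) ⊆ (Δ : Set (Dual ℚ V)) ∧
        αt - γ = c.sum (fun β k => k • β) ∧ (∀ β, 0 ≤ c β))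
    (hα₀ : -αt ∉ (Δ : Set (Dual ℚ V)))
    (hspan : Submodule.span ℚ R.Φ = ⊤) :
    (intAlc Δ αt).Nonempty := by
  classical
  have hspanΔ : Submodule.span ℚ (Δ : Set (Dual ℚ V)) = ⊤ := by
    rw [eq_top_iff, ← hspan, Submodule.span_le]
    intro α hα
    obtain ⟨c, hsupp, hsum, _⟩ := hΔbase α hα
    rw [finsupp_to_del_int Δ c hsupp] at hsum
    rw [hsum]
    exact Submodule.sum_mem _ (fun β hβ =>
      Submodule.smul_mem _ _ (Submodule.subset_span (by exact hβ)))
  obtain ⟨y₁, hy₁⟩ := exists_one_forms hspanΔ hΔind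
  obtain ⟨d, hdsupp, hdsum, hdpos⟩ := ht_coeffs R Δ αt hΔΦ hΔind hΔbase hαtΦ hhigh
  set D : ℚ := ∑ β ∈ Δ, (d β : ℚ) with hD
  have hDval : αt y₁ = D := by
    rw [hdsum, sum_del_apply]
    apply Finset.sum_congr rfl
    intro β hβ
    rw [hy₁ β hβ, mul_one]
  have hDpos : 0 < D := by
    have hne : ∃ β ∈ Δ, d β ≠ 0 := by
      by_contra h
      push_neg at h
      apply root_ne_zero R hαtΦ
      rw [hdsum]
      apply Finset.sum_eq_zero
      intro β hβ
      rw [h β hβ]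
      simp
    obtain ⟨β₀, hβ₀, hdβ₀⟩ := hne
    have : (0:ℚ) < (d β₀ : ℚ) := by
      have := hdpos β₀
      have : (0:ℤ) < d β₀ := lt_of_le_of_ne this (Ne.symm hdβ₀)
      exact_mod_cast this
    apply Finset.sum_pos'
    · intro β _
      exact_mod_cast hdpos β
    · exact ⟨β₀, hβ₀, this⟩
  refine ⟨(2 * D)⁻¹ • y₁, ?_⟩
  intro s hs
  have h2D : (0:ℚ) < (2 * D)⁻¹ := by positivity
  by_cases hsneg : s = -αt
  · subst hsneg
    rw [mfun_neg_ht]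
    have hval : (-αt) ((2 * D)⁻¹ • y₁) = -((2 * D)⁻¹ * D) := by
      rw [map_smul, LinearMap.neg_apply, hDval, smul_eq_mul]
      ring
    have h12 : (2 * D)⁻¹ * D = 1/2 := by field_simp
    rw [hval, h12]
    norm_num
  · have hsΔ : s ∈ Δ := by
      rcases hs with h | h
      · exact absurd h hsneg
      · exact h
    have hms : mfun αt s = 0 := by rw [mfun, if_neg hsneg]
    rw [hms, map_smul, hy₁ s hsΔ]
    simpa using h2D

end Hyps
end QI
-- chunk 5
namespace QI
variable {V : Type*} [AddCommGroup V] [Module ℚ V]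

/-- Bundle of the standing hypotheses on the base and highest root. -/
structure Good (R : RootSystemData V) (Δ : Finset (Dual ℚ V)) (αt : Dual ℚ V) : Prop where
  hΔΦ : (Δ : Set (Dual ℚ V)) ⊆ R.Φ
  hΔind : LinearIndependent ℚ (fun x : (Δ : Set (Dual ℚ V)) => (x : Dual ℚ V))
  hΔbase : ∀ α ∈ R.Φ, ∃ c : Dual ℚ V →₀ ℤ,
      (c.support : Set (Dual ℚ V)) ⊆ (Δ : Set (Dual ℚ V)) ∧
      α = c.sum (fun β k => (k : ℚ) • β) ∧
      ((∀ β, 0 ≤ c β) ∨ (∀ β, c β ≤ 0))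
  hαtΦ : αt ∈ R.Φ
  hhigh : ∀ γ ∈ R.Φ, ∃ c : Dual ℚ V →₀ ℚ,
      (c.support : Set (Dual ℚ V)) ⊆ (Δ : Set (Dual ℚ V)) ∧
      αt - γ = c.sum (fun β k => k • β) ∧ (∀ β, 0 ≤ c β)
  hα₀ : -αt ∉ (Δ : Set (Dual ℚ V))

section Bounds
variable {R : RootSystemData V} {Δ : Finset (Dual ℚ V)} {αt : Dual ℚ V}
  (G : Good R Δ αt)

lemma intAlc_subset_alcove : intAlc Δ αt ⊆ alcove Δ αt :=
  fun _ hy s hs => le_of_lt (hy s hs)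

lemma intAlc_ht_lt_one {y : V} (hy : y ∈ intAlc Δ αt) : αt y < 1 := by
  have := hy (-αt) (Or.inl rfl)
  rw [mfun_neg_ht, LinearMap.neg_apply] at this
  linarith

lemma exists_coeff_ne {α : Dual ℚ V} (hα : α ∈ R.Φ) {c : Dual ℚ V →₀ ℤ}
    (hsum : α = ∑ β ∈ Δ, (c β : ℚ) • β) : ∃ β ∈ Δ, c β ≠ 0 := by
  by_contra h
  push_neg at h
  apply root_ne_zero R hα
  rw [hsum]
  apply Finset.sum_eq_zero
  intro β hβ
  rw [h β hβ]
  simp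

lemma evl_affine (a : Dual ℚ V × ℚ) (x y : V) (ε : ℚ) :
    evl (x + ε • (y - x)) a = evl x a + ε * (evl y a - evl x a) := by
  simp only [evl_apply, map_add, map_smul, map_sub, smul_eq_mul]
  ring

lemma seg_mem_intAlc {x y : V} (hx : x ∈ alcove Δ αt) (hy : y ∈ intAlc Δ αt) {ε : ℚ}
    (h0 : 0 < ε) (h1 : ε ≤ 1) : x + ε • (y - x) ∈ intAlc Δ αt := by
  intro s hs
  have hsx := hx s hs
  have hsy := hy s hs
  have : s (x + ε • (y - x)) = s x + ε * (s y - s x) := by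
    simp only [map_add, map_smul, map_sub, smul_eq_mul]
  rw [this]
  nlinarith


include G in
lemma alcove_del_nonneg {x : V} (hx : x ∈ alcove Δ αt) {β : Dual ℚ V} (hβ : β ∈ Δ) :
    0 ≤ β x := by
  have := hx β (Or.inr hβ)
  rwa [mfun_of_mem_del G.hα₀ hβ] at this

include G in
lemma intAlc_del_pos {y : V} (hy : y ∈ intAlc Δ αt) {β : Dual ℚ V} (hβ : β ∈ Δ) :
    0 < β y := by
  have := hy β (Or.inr hβ)
  rwa [mfun_of_mem_del G.hα₀ hβ] at this

include G in
lemma le_ht {α : Dual ℚ V} (hα : α ∈ R.Φ) {y : V} (hy : ∀ β ∈ Δ, 0 ≤ β y) :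
    α y ≤ αt y := by
  obtain ⟨e, hesupp, hesum, hepos⟩ := G.hhigh α hα
  rw [finsupp_to_del_rat Δ e hesupp] at hesum
  have h1 : αt y - α y = ∑ β ∈ Δ, e β * β y := by
    have := congrArg (fun φ : Dual ℚ V => φ y) hesum
    simpa [sum_del_apply] using this
  have h2 : 0 ≤ ∑ β ∈ Δ, e β * β y :=
    Finset.sum_nonneg (fun β hβ => mul_nonneg (hepos β) (hy β hβ))
  linarith

include G in
lemma root_bounds {α : Dual ℚ V} (hα : α ∈ R.Φ) {y : V} (hy : y ∈ intAlc Δ αt) :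
    (0 < α y ∧ α y < 1) ∨ (α y < 0 ∧ -1 < α y) := by
  obtain ⟨c, hsupp, hsum, hbr⟩ := G.hΔbase α hα
  rw [finsupp_to_del_int Δ c hsupp] at hsum
  have hval : α y = ∑ β ∈ Δ, (c β : ℚ) * β y := by
    rw [hsum, sum_del_apply]
  obtain ⟨β₀, hβ₀, hcβ₀⟩ := exists_coeff_ne hα hsum
  have hynn : ∀ β ∈ Δ, 0 ≤ β y := fun β hβ => le_of_lt (intAlc_del_pos G hy hβ)
  have hht : αt y < 1 := intAlc_ht_lt_one hy
  rcases hbr with hpos | hneg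
  · left
    constructor
    · rw [hval]
      apply Finset.sum_pos'
      · intro β hβ
        exact mul_nonneg (by exact_mod_cast hpos β) (hynn β hβ)
      · refine ⟨β₀, hβ₀, ?_⟩
        have h1 : (0:ℚ) < (c β₀ : ℚ) := by
          have := lt_of_le_of_ne (hpos β₀) (Ne.symm hcβ₀)
          exact_mod_cast this
        exact mul_pos h1 (intAlc_del_pos G hy hβ₀)
    · exact lt_of_le_of_lt (le_ht G hα hynn) hht
  · right
    constructor
    · rw [hval]
      have : 0 < ∑ β ∈ Δ, -((c β : ℚ) * β y) := by
        apply Finset.sum_pos'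
        · intro β hβ
          have : (c β : ℚ) ≤ 0 := by exact_mod_cast hneg β
          nlinarith [hynn β hβ]
        · refine ⟨β₀, hβ₀, ?_⟩
          have h1 : (c β₀ : ℚ) < 0 := by
            have := lt_of_le_of_ne (hneg β₀) hcβ₀
            exact_mod_cast this
          nlinarith [intAlc_del_pos G hy hβ₀]
      have h3 : ∑ β ∈ Δ, -((c β : ℚ) * β y) = -(∑ β ∈ Δ, (c β : ℚ) * β y) := by
        simp
      rw [h3] at this
      linarith
    · have h1 : (-α) y ≤ αt y := le_ht G (neg_mem_phi R hα) hynn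
      rw [LinearMap.neg_apply] at h1
      linarith

include G in
lemma evl_ne_zero_AR {a : Dual ℚ V × ℚ} (ha : a ∈ AR R) {y : V}
    (hy : y ∈ intAlc Δ αt) : evl y a ≠ 0 := by
  obtain ⟨hα, k, hk⟩ := ha
  intro h0
  rw [evl_apply, ← hk] at h0
  have hb := root_bounds G hα hy
  rcases hb with ⟨h1, h2⟩ | ⟨h1, h2⟩
  · have e1 : (0:ℚ) < -(k:ℚ) := by linarith
    have e2 : (-(k:ℚ)) < 1 := by linarith
    have e1' : (0:ℤ) < -k := by exact_mod_cast e1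
    have e2' : (-k:ℤ) < 1 := by exact_mod_cast e2
    omega
  · have e1 : (0:ℚ) < (k:ℚ) := by linarith
    have e2 : ((k:ℚ)) < 1 := by linarith
    have e1' : (0:ℤ) < k := by exact_mod_cast e1
    have e2' : (k:ℤ) < 1 := by exact_mod_cast e2
    omega

include G in
lemma pos_of_pos_at_alcove_pt {a : Dual ℚ V × ℚ} (ha : a ∈ AR R) {x : V}
    (hx : x ∈ alcove Δ αt) (hpos : 0 < evl x a) : a ∈ Pos R Δ αt := by
  refine ⟨ha, ?_⟩
  intro y hy
  by_contra hcon
  push_neg at hcon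
  have hne : evl y a ≠ 0 := evl_ne_zero_AR G ha hy
  have hFneg : evl y a < 0 := lt_of_le_of_ne hcon hne
  set E := evl x a
  set F := evl y a
  set ε : ℚ := E / (E - F) with hε
  have hden : 0 < E - F := by linarith
  have hε0 : 0 < ε := div_pos hpos hden
  have hε1 : ε ≤ 1 := by
    rw [div_le_one hden]
    linarith
  have hp : x + ε • (y - x) ∈ intAlc Δ αt := seg_mem_intAlc hx hy hε0 hε1
  have : evl (x + ε • (y - x)) a = 0 := by
    rw [evl_affine]
    show E + ε * (F - E) = 0
    rw [hε]
    field_simp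
    ring
  exact evl_ne_zero_AR G ha hp this

include G in
lemma nonneg_on_alcove [FiniteDimensional ℚ V] (hspan : Submodule.span ℚ R.Φ = ⊤)
    {a : Dual ℚ V × ℚ} (ha : a ∈ Pos R Δ αt) {x : V} (hx : x ∈ alcove Δ αt) :
    0 ≤ evl x a := by
  obtain ⟨y, hy⟩ := intAlc_nonempty R Δ αt G.hΔΦ G.hΔind G.hΔbase G.hαtΦ G.hhigh G.hα₀ hspan
  have hF : 0 < evl y a := ha.2 y hy
  by_contra hcon
  push_neg at hcon
  set E := evl x a
  set F := evl y a
  set ε : ℚ := -E / (F - E) with hε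
  have hden : 0 < F - E := by linarith
  have hε0 : 0 < ε := div_pos (by linarith) hden
  have hε1 : ε ≤ 1 := by
    rw [div_le_one hden]
    linarith
  have hp : x + ε • (y - x) ∈ intAlc Δ αt := seg_mem_intAlc hx hy hε0 hε1
  have : evl (x + ε • (y - x)) a = 0 := by
    rw [evl_affine]
    show E + ε * (F - E) = 0
    rw [hε]
    field_simp
    ring
  exact evl_ne_zero_AR G ha.1 hp this

include G in
lemma asimp_mem_AR {s : Dual ℚ V} (hs : s ∈ extBase Δ αt) : Asimp αt s ∈ AR R := by
  constructor
  · rcases hs with h | h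
    · rw [h]; exact neg_mem_phi R G.hαtΦ
    · exact G.hΔΦ h
  · by_cases h : s = -αt
    · exact ⟨1, by simp [Asimp, mfun, h]⟩
    · exact ⟨0, by simp [Asimp, mfun, h]⟩

include G in
lemma asimp_mem_pos {s : Dual ℚ V} (hs : s ∈ extBase Δ αt) :
    Asimp αt s ∈ Pos R Δ αt := by
  refine ⟨asimp_mem_AR G hs, ?_⟩
  intro y hy
  rw [evl_Asimp]
  have := hy s hs
  linarith

include G in
lemma alcove_iff_pos [FiniteDimensional ℚ V] (hspan : Submodule.span ℚ R.Φ = ⊤)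
    (x : V) : x ∈ alcove Δ αt ↔ ∀ a ∈ Pos R Δ αt, 0 ≤ evl x a := by
  constructor
  · intro hx a ha
    exact nonneg_on_alcove G hspan ha hx
  · intro h s hs
    have := h (Asimp αt s) (asimp_mem_pos G hs)
    rw [evl_Asimp] at this
    linarith

include G in
lemma intAlc_iff_alcove (y : V) :
    y ∈ intAlc Δ αt ↔ y ∈ alcove Δ αt ∧ ∀ a ∈ AR R, evl y a ≠ 0 := by
  constructor
  · intro hy
    exact ⟨intAlc_subset_alcove hy, fun a ha => evl_ne_zero_AR G ha hy⟩
  · rintro ⟨hy, hne⟩ s hs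
    have h1 := hy s hs
    have h2 := hne (Asimp αt s) (asimp_mem_AR G hs)
    rw [evl_Asimp] at h2
    rcases lt_or_eq_of_le h1 with h | h
    · exact h
    · exact absurd (by linarith : s y - mfun αt s = 0) h2

end Bounds
end QI
-- chunk 6
namespace QI
variable {V : Type*} [AddCommGroup V] [Module ℚ V]

lemma sum_asimp_fst (S : Finset (Dual ℚ V)) (n : Dual ℚ V → ℚ) (αt : Dual ℚ V) :
    (∑ s ∈ S, n s • Asimp αt s).1 = ∑ s ∈ S, n s • s := by
  classical
  induction S using Finset.cons_induction with
  | empty => simp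
  | cons a S ha ih =>
      rw [Finset.sum_cons, Finset.sum_cons, Prod.fst_add, ih]
      simp [Asimp]

lemma sum_asimp_snd (S : Finset (Dual ℚ V)) (n : Dual ℚ V → ℚ) (αt : Dual ℚ V) :
    (∑ s ∈ S, n s • Asimp αt s).2 = ∑ s ∈ S, n s * (-(mfun αt s)) := by
  classical
  induction S using Finset.cons_induction with
  | empty => simp
  | cons a S ha ih =>
      rw [Finset.sum_cons, Finset.sum_cons, Prod.snd_add, ih]
      simp [Asimp, smul_eq_mul]

section ExtTheory
variable {R : RootSystemData V} {Δ : Finset (Dual ℚ V)} {αt : Dual ℚ V}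
  (G : Good R Δ αt)

lemma neg_ht_not_mem_del (G : Good R Δ αt) : -αt ∉ Δ := fun h => G.hα₀ (by exact_mod_cast h)

include G in
lemma tdel_coords (n : Dual ℚ V → ℚ)
    (h : ∑ s ∈ tDel Δ αt, n s • Asimp αt s = 0) : ∀ s ∈ tDel Δ αt, n s = 0 := by
  classical
  have hnotin : -αt ∉ Δ := neg_ht_not_mem_del G
  have hins : ∑ s ∈ tDel Δ αt, n s • Asimp αt s
      = n (-αt) • Asimp αt (-αt) + ∑ s ∈ Δ, n s • Asimp αt s := by
    rw [tDel]
    convert Finset.sum_insert hnotin using 2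
  rw [hins] at h
  have hsnd := congrArg Prod.snd h
  have hsnd2 : n (-αt) = 0 := by
    have e1 : (n (-αt) • Asimp αt (-αt) + ∑ s ∈ Δ, n s • Asimp αt s).2
        = n (-αt) * 1 + ∑ s ∈ Δ, n s * (-(mfun αt s)) := by
      rw [Prod.snd_add, sum_asimp_snd]
      congr 1
      simp [Asimp, mfun_neg_ht, smul_eq_mul]
    have e2 : ∑ s ∈ Δ, n s * (-(mfun αt s)) = 0 := by
      apply Finset.sum_eq_zero
      intro s hs
      rw [mfun_of_mem_del G.hα₀ hs]
      ring
    rw [e1, e2] at hsnd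
    simpa using hsnd
  have hfst := congrArg Prod.fst h
  have e3 : (n (-αt) • Asimp αt (-αt) + ∑ s ∈ Δ, n s • Asimp αt s).1
      = n (-αt) • (-αt) + ∑ s ∈ Δ, n s • s := by
    rw [Prod.fst_add, sum_asimp_fst]
    congr 1
  rw [e3, hsnd2] at hfst
  simp only [zero_smul, zero_add] at hfst
  have hdel := del_coords G.hΔind n (by simpa using hfst)
  intro s hs
  rw [mem_tDel] at hs
  rcases hs with h' | h'
  · rw [h']; exact hsnd2
  · exact hdel s h'

set_option maxHeartbeats 1000000 in
include G in
lemma pos_decomp [FiniteDimensional ℚ V] (hspan : Submodule.span ℚ R.Φ = ⊤)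
    {a : Dual ℚ V × ℚ} (ha : a ∈ Pos R Δ αt) :
    ∃ n : Dual ℚ V → ℚ, (∀ s, 0 ≤ n s) ∧ a = ∑ s ∈ tDel Δ αt, n s • Asimp αt s := by
  classical
  obtain ⟨⟨hα, k, hk⟩, hposv⟩ := ha
  obtain ⟨y₀, hy₀⟩ := intAlc_nonempty R Δ αt G.hΔΦ G.hΔind G.hΔbase G.hαtΦ G.hhigh G.hα₀ hspan
  obtain ⟨d, hdsupp, hdsum, hdpos⟩ := ht_coeffs R Δ αt G.hΔΦ G.hΔind G.hΔbase G.hαtΦ G.hhigh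
  have hnotin : -αt ∉ Δ := neg_ht_not_mem_del G
  have hins : ∀ n : Dual ℚ V → ℚ, ∑ s ∈ tDel Δ αt, n s • Asimp αt s
      = n (-αt) • Asimp αt (-αt) + ∑ s ∈ Δ, n s • Asimp αt s := by
    intro n
    rw [tDel]
    convert Finset.sum_insert hnotin using 2
  have hevly : 0 < a.1 y₀ + a.2 := hposv y₀ hy₀
  have hynn : ∀ β ∈ Δ, 0 ≤ β y₀ := fun β hβ => le_of_lt (intAlc_del_pos G hy₀ hβ)
  have hht : αt y₀ < 1 := intAlc_ht_lt_one hy₀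
  have hlt1 : a.1 y₀ < 1 := lt_of_le_of_lt (le_ht G hα hynn) hht
  obtain ⟨c, hcsupp, hcsum, hbr⟩ := G.hΔbase a.1 hα
  rw [finsupp_to_del_int Δ c hcsupp] at hcsum
  have hval : a.1 y₀ = ∑ β ∈ Δ, (c β : ℚ) * β y₀ := by rw [hcsum, sum_del_apply]
  rcases hbr with hpos | hneg
  · -- nonnegative coefficients; k ≥ 0
    have hk0 : (0:ℤ) ≤ k := by
      have h1 : (-1:ℚ) < (k:ℚ) := by linarith
      have h2 : (-1:ℤ) < k := by exact_mod_cast h1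
      omega
    refine ⟨fun s => if s = -αt then (k:ℚ) else (c s : ℚ) + (k:ℚ) * (d s : ℚ), ?_, ?_⟩
    · intro s
      dsimp only
      by_cases h : s = -αt
      · rw [if_pos h]; exact_mod_cast hk0
      · rw [if_neg h]
        have h1 : (0:ℚ) ≤ (c s : ℚ) := by exact_mod_cast hpos s
        have h2 : (0:ℚ) ≤ (d s : ℚ) := by exact_mod_cast hdpos s
        have h3 : (0:ℚ) ≤ (k:ℚ) := by exact_mod_cast hk0
        positivity
    · rw [hins]
      have hdeleq : ∀ s ∈ Δ, (if s = -αt then (k:ℚ) else (c s : ℚ) + (k:ℚ) * (d s : ℚ))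
          • Asimp αt s = ((c s : ℚ) + (k:ℚ) * (d s : ℚ)) • Asimp αt s := by
        intro s hs
        have hne : s ≠ -αt := fun h => hnotin (h ▸ hs)
        rw [if_neg hne]
      rw [Finset.sum_congr rfl hdeleq, if_pos rfl]
      apply Prod.ext
      · rw [Prod.fst_add, sum_asimp_fst]
        simp only [Asimp, Prod.smul_fst]
        have : ∑ s ∈ Δ, ((c s : ℚ) + (k:ℚ) * (d s : ℚ)) • s
            = ∑ s ∈ Δ, (c s : ℚ) • s + (k:ℚ) • ∑ s ∈ Δ, (d s : ℚ) • s := by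
          rw [Finset.smul_sum, ← Finset.sum_add_distrib]
          apply Finset.sum_congr rfl
          intro s _
          rw [add_smul, mul_smul]
        rw [this, ← hcsum, ← hdsum]
        module
      · rw [Prod.snd_add, sum_asimp_snd]
        have e2 : ∑ s ∈ Δ, ((c s : ℚ) + (k:ℚ) * (d s : ℚ)) * (-(mfun αt s)) = 0 := by
          apply Finset.sum_eq_zero
          intro s hs
          rw [mfun_of_mem_del G.hα₀ hs]
          ring
        rw [e2]
        simp [Asimp, mfun_neg_ht, smul_eq_mul, ← hk]
  · -- nonpositive coefficients; k ≥ 1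
    obtain ⟨β₀, hβ₀, hcβ₀⟩ := exists_coeff_ne hα hcsum
    have hneg' : a.1 y₀ < 0 := by
      rw [hval]
      have : 0 < ∑ β ∈ Δ, -((c β : ℚ) * β y₀) := by
        apply Finset.sum_pos'
        · intro β hβ
          have : (c β : ℚ) ≤ 0 := by exact_mod_cast hneg β
          nlinarith [hynn β hβ]
        · refine ⟨β₀, hβ₀, ?_⟩
          have h1 : (c β₀ : ℚ) < 0 := by
            have := lt_of_le_of_ne (hneg β₀) hcβ₀
            exact_mod_cast this
          nlinarith [intAlc_del_pos G hy₀ hβ₀]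
      have h3 : ∑ β ∈ Δ, -((c β : ℚ) * β y₀) = -(∑ β ∈ Δ, (c β : ℚ) * β y₀) := by simp
      rw [h3] at this
      linarith
    have hk1 : (1:ℤ) ≤ k := by
      have h1 : (0:ℚ) < (k:ℚ) := by linarith
      have h2 : (0:ℤ) < k := by exact_mod_cast h1
      omega
    obtain ⟨e, hesupp, hesum, hepos⟩ := G.hhigh (-a.1) (neg_mem_phi R hα)
    rw [finsupp_to_del_rat Δ e hesupp, sub_neg_eq_add] at hesum
    refine ⟨fun s => if s = -αt then (k:ℚ) else e s + ((k:ℚ) - 1) * (d s : ℚ), ?_, ?_⟩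
    · intro s
      dsimp only
      by_cases h : s = -αt
      · rw [if_pos h]
        have : (1:ℚ) ≤ (k:ℚ) := by exact_mod_cast hk1
        linarith
      · rw [if_neg h]
        have h1 : (0:ℚ) ≤ e s := hepos s
        have h2 : (0:ℚ) ≤ (d s : ℚ) := by exact_mod_cast hdpos s
        have h3 : (1:ℚ) ≤ (k:ℚ) := by exact_mod_cast hk1
        nlinarith
    · rw [hins]
      have hdeleq : ∀ s ∈ Δ, (if s = -αt then (k:ℚ) else e s + ((k:ℚ) - 1) * (d s : ℚ))
          • Asimp αt s = (e s + ((k:ℚ) - 1) * (d s : ℚ)) • Asimp αt s := by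
        intro s hs
        have hne : s ≠ -αt := fun h => hnotin (h ▸ hs)
        rw [if_neg hne]
      rw [Finset.sum_congr rfl hdeleq, if_pos rfl]
      apply Prod.ext
      · rw [Prod.fst_add, sum_asimp_fst]
        simp only [Asimp, Prod.smul_fst]
        have : ∑ s ∈ Δ, (e s + ((k:ℚ) - 1) * (d s : ℚ)) • s
            = ∑ s ∈ Δ, e s • s + ((k:ℚ) - 1) • ∑ s ∈ Δ, (d s : ℚ) • s := by
          rw [Finset.smul_sum, ← Finset.sum_add_distrib]
          apply Finset.sum_congr rfl
          intro s _
          rw [add_smul, mul_smul]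
        rw [this, ← hesum, ← hdsum]
        module
      · rw [Prod.snd_add, sum_asimp_snd]
        have e2 : ∑ s ∈ Δ, (e s + ((k:ℚ) - 1) * (d s : ℚ)) * (-(mfun αt s)) = 0 := by
          apply Finset.sum_eq_zero
          intro s hs
          rw [mfun_of_mem_del G.hα₀ hs]
          ring
        rw [e2]
        simp [Asimp, mfun_neg_ht, smul_eq_mul, ← hk]

end ExtTheory
end QI
-- chunk 7
namespace QI
variable {V : Type*} [AddCommGroup V] [Module ℚ V]

/-- Extreme elements of the cone of positive affine roots. -/
def Ext (R : RootSystemData V) (Δ : Finset (Dual ℚ V)) (αt : Dual ℚ V) :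
    Set (Dual ℚ V × ℚ) :=
  {a | a ∈ Pos R Δ αt ∧ ∀ (S : Finset (Dual ℚ V × ℚ)) (c : (Dual ℚ V × ℚ) → ℚ),
    (∀ b ∈ S, b ∈ Pos R Δ αt ∧ 0 < c b) → a = ∑ b ∈ S, c b • b → ∀ b ∈ S, b = a}

section ExtTheory2
variable {R : RootSystemData V} {Δ : Finset (Dual ℚ V)} {αt : Dual ℚ V}
  (G : Good R Δ αt) [FiniteDimensional ℚ V]

lemma ar_ne_zero {a : Dual ℚ V × ℚ} (ha : a ∈ AR R) : a ≠ 0 := by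
  intro h
  apply root_ne_zero R ha.1
  rw [h]
  rfl

include G in
lemma asimp_mem_ext (hspan : Submodule.span ℚ R.Φ = ⊤) {s : Dual ℚ V}
    (hs : s ∈ extBase Δ αt) : Asimp αt s ∈ Ext R Δ αt := by
  classical
  refine ⟨asimp_mem_pos G hs, ?_⟩
  intro S c hS hsum b hb
  have hdec : ∀ b : Dual ℚ V × ℚ, ∃ n : Dual ℚ V → ℚ,
      b ∈ Pos R Δ αt → ((∀ t, 0 ≤ n t) ∧ b = ∑ t ∈ tDel Δ αt, n t • Asimp αt t) := by
    intro b
    by_cases hb : b ∈ Pos R Δ αt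
    · obtain ⟨n, hn⟩ := pos_decomp G hspan hb
      exact ⟨n, fun _ => hn⟩
    · exact ⟨0, fun h => absurd h hb⟩
  choose n hn using hdec
  have hsum2 : Asimp αt s = ∑ t ∈ tDel Δ αt, (∑ b ∈ S, c b * n b t) • Asimp αt t := by
    rw [hsum]
    have step1 : ∀ b ∈ S, c b • b = ∑ t ∈ tDel Δ αt, (c b * n b t) • Asimp αt t := by
      intro b hb
      have hb2 := (hn b (hS b hb).1).2
      calc c b • b = c b • ∑ t ∈ tDel Δ αt, n b t • Asimp αt t := by rw [← hb2]
        _ = ∑ t ∈ tDel Δ αt, (c b * n b t) • Asimp αt t := by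
            rw [Finset.smul_sum]
            exact Finset.sum_congr rfl (fun t _ => smul_smul _ _ _)
    rw [Finset.sum_congr rfl step1, Finset.sum_comm]
    apply Finset.sum_congr rfl
    intro t _
    rw [Finset.sum_smul]
  have hstd : Asimp αt s = ∑ t ∈ tDel Δ αt, (if t = s then (1:ℚ) else 0) • Asimp αt t := by
    simp only [ite_smul, one_smul, zero_smul]
    rw [Finset.sum_ite_eq' (tDel Δ αt) s (fun t => Asimp αt t)]
    rw [if_pos (mem_tDel.mpr hs)]
  have hzero : ∑ t ∈ tDel Δ αt,
      ((∑ b ∈ S, c b * n b t) - (if t = s then (1:ℚ) else 0)) • Asimp αt t = 0 := by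
    simp only [sub_smul]
    rw [Finset.sum_sub_distrib, ← hsum2, ← hstd]
    abel
  have hcoord := tdel_coords G _ hzero
  -- coefficients of b are supported at s
  have hbposn := (hn b (hS b hb).1)
  have hnt0 : ∀ t ∈ tDel Δ αt, t ≠ s → n b t = 0 := by
    intro t ht hts
    have h0 := hcoord t ht
    rw [if_neg hts] at h0
    have hsumz : ∑ b' ∈ S, c b' * n b' t = 0 := by linarith
    have := (Finset.sum_eq_zero_iff_of_nonneg (fun b' hb' =>
      mul_nonneg (le_of_lt (hS b' hb').2) ((hn b' (hS b' hb').1).1 t))).mp hsumz b hb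
    have hcb : 0 < c b := (hS b hb).2
    have := mul_eq_zero.mp this
    rcases this with h | h
    · exact absurd h (ne_of_gt hcb)
    · exact h
  have hsingle : ∑ t ∈ tDel Δ αt, n b t • Asimp αt t = n b s • Asimp αt s :=
    Finset.sum_eq_single s (fun t ht hts => by rw [hnt0 t ht hts, zero_smul])
      (fun hns => absurd (mem_tDel.mpr hs) hns)
  have hbs : b = n b s • Asimp αt s := hbposn.2.trans hsingle
  -- the coefficient is 1 by reducedness
  have hsΦ : s ∈ R.Φ := by
    rcases hs with h | h
    · rw [h]; exact neg_mem_phi R G.hαtΦ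
    · exact G.hΔΦ h
  have hb1 : b.1 = n b s • s := by
    have := congrArg Prod.fst hbs
    simpa [Asimp] using this
  have hbΦ : b.1 ∈ R.Φ := (hS b hb).1.1.1
  have hred := R.reduced s hsΦ (n b s) (by rw [← hb1]; exact hbΦ)
  have hn1 : n b s = 1 := by
    rcases hred with h | h
    · exact h
    · exfalso
      have := hbposn.1 s
      rw [h] at this
      linarith
  rw [hbs, hn1, one_smul]

include G in
lemma ext_eq_asimp (hspan : Submodule.span ℚ R.Φ = ⊤) {a : Dual ℚ V × ℚ}
    (ha : a ∈ Ext R Δ αt) : ∃ s ∈ extBase Δ αt, a = Asimp αt s := by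
  classical
  obtain ⟨n, hn0, hna⟩ := pos_decomp G hspan ha.1
  set S : Finset (Dual ℚ V × ℚ) :=
    ((tDel Δ αt).filter (fun t => n t ≠ 0)).image (Asimp αt) with hSdef
  have hS : ∀ b ∈ S, b ∈ Pos R Δ αt ∧ 0 < (fun b : Dual ℚ V × ℚ => n b.1) b := by
    intro b hb
    rw [hSdef, Finset.mem_image] at hb
    obtain ⟨t, ht, rfl⟩ := hb
    rw [Finset.mem_filter] at ht
    constructor
    · exact asimp_mem_pos G (mem_tDel.mp ht.1)
    · show 0 < n (Asimp αt t).1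
      have : (Asimp αt t).1 = t := rfl
      rw [this]
      exact lt_of_le_of_ne (hn0 t) (Ne.symm ht.2)
  have hsum : a = ∑ b ∈ S, (fun b : Dual ℚ V × ℚ => n b.1) b • b := by
    rw [hSdef, Finset.sum_image (fun t _ t' _ h => Asimp_injective αt h)]
    have e1 : ∑ t ∈ (tDel Δ αt).filter (fun t => n t ≠ 0),
        ((fun b : Dual ℚ V × ℚ => n b.1) (Asimp αt t)) • Asimp αt t
        = ∑ t ∈ (tDel Δ αt).filter (fun t => n t ≠ 0), n t • Asimp αt t :=
      Finset.sum_congr rfl (fun t _ => rfl)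
    rw [e1, hna]
    symm
    apply Finset.sum_subset (Finset.filter_subset _ _)
    intro t ht hnt
    rw [Finset.mem_filter] at hnt
    push_neg at hnt
    rw [hnt ht, zero_smul]
  have hall := ha.2 S _ hS hsum
  have hSne : S.Nonempty := by
    by_contra h
    rw [Finset.not_nonempty_iff_eq_empty] at h
    rw [h, Finset.sum_empty] at hsum
    exact ar_ne_zero ha.1.1 hsum
  obtain ⟨b, hb⟩ := hSne
  have hba := hall b hb
  rw [hSdef, Finset.mem_image] at hb
  obtain ⟨t, ht, rfl⟩ := hb
  rw [Finset.mem_filter] at ht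
  exact ⟨t, mem_tDel.mp ht.1, hba.symm⟩

/-- Transport of extremality under the affine transformation. -/
lemma ext_T_invar (w : V ≃ₗ[ℚ] V) (v : V)
    (hT : ∀ b ∈ Pos R Δ αt, Tmap w v b ∈ Pos R Δ αt)
    (hT' : ∀ b ∈ Pos R Δ αt, Tmap w⁻¹ (-(w.symm v)) b ∈ Pos R Δ αt)
    {a : Dual ℚ V × ℚ} (ha : a ∈ Ext R Δ αt) : Tmap w v a ∈ Ext R Δ αt := by
  classical
  refine ⟨hT a ha.1, ?_⟩
  intro S c hS hsum b hb
  set T' := Tmap w⁻¹ (-(w.symm v)) with hT'def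
  have hinj : Function.Injective (fun b => T' b) :=
    Function.LeftInverse.injective (g := fun b => Tmap w v b) (fun b => Tmap_Tmap_inv w v b)
  have hsum' : a = ∑ b' ∈ S.image (fun b => T' b), c (Tmap w v b') • b' := by
    rw [Finset.sum_image (fun t _ t' _ h => hinj h)]
    have : a = T' (Tmap w v a) := (Tmap_inv_Tmap w v a).symm
    rw [this, hsum, map_sum]
    apply Finset.sum_congr rfl
    intro b' hb'
    rw [map_smul]
    congr 1
    exact (congrArg c (Tmap_Tmap_inv w v b')).symm
  have hS' : ∀ b' ∈ S.image (fun b => T' b), b' ∈ Pos R Δ αt ∧ 0 < c (Tmap w v b') := by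
    intro b' hb'
    rw [Finset.mem_image] at hb'
    obtain ⟨b'', hb'', rfl⟩ := hb'
    constructor
    · exact hT' b'' (hS b'' hb'').1
    · have : Tmap w v (T' b'') = b'' := Tmap_Tmap_inv w v b''
      rw [this]
      exact (hS b'' hb'').2
  have hall := ha.2 (S.image (fun b => T' b)) _ hS' hsum'
  have hTba := hall (T' b) (Finset.mem_image_of_mem _ hb)
  calc b = Tmap w v (T' b) := (Tmap_Tmap_inv w v b).symm
  _ = Tmap w v a := by rw [hTba]

end ExtTheory2
end QI
-- chunk 8
namespace QI
variable {V : Type*} [AddCommGroup V] [Module ℚ V]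

section MainLemmas
variable {R : RootSystemData V} {Δ : Finset (Dual ℚ V)} {αt : Dual ℚ V}
  (G : Good R Δ αt) [FiniteDimensional ℚ V]

lemma T_AR {w : V ≃ₗ[ℚ] V} (hw : w ∈ weyl R) {v : V} (hv : v ∈ coweightSet R)
    {a : Dual ℚ V × ℚ} (ha : a ∈ AR R) : Tmap w v a ∈ AR R := by
  obtain ⟨hα, k, hk⟩ := ha
  have hΦ : dact w a.1 ∈ R.Φ := weyl_dact_mem R hw hα
  obtain ⟨m, hm⟩ := hv (dact w a.1) hΦ
  refine ⟨hΦ, k - m, ?_⟩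
  show ((k - m : ℤ) : ℚ) = a.2 - dact w a.1 v
  push_cast
  rw [hk, hm]

lemma eq_of_fst_evl (x : V) (a b : Dual ℚ V × ℚ) (h1 : a.1 = b.1)
    (h2 : evl x a = evl x b) : a = b := by
  apply Prod.ext h1
  rw [evl_apply, evl_apply, h1] at h2
  linarith

include G in
lemma imgs_of_pos_preserved (hspan : Submodule.span ℚ R.Φ = ⊤) (w : V ≃ₗ[ℚ] V) (v : V)
    (hT : ∀ b ∈ Pos R Δ αt, Tmap w v b ∈ Pos R Δ αt)
    (hT' : ∀ b ∈ Pos R Δ αt, Tmap w⁻¹ (-(w.symm v)) b ∈ Pos R Δ αt) :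
    (∀ s ∈ extBase Δ αt, Tmap w v (Asimp αt s) = Asimp αt (dact w s) ∧
      dact w s ∈ extBase Δ αt) ∧
    dact w '' extBase Δ αt = extBase Δ αt ∧
    (fun y => w y + v) '' alcove Δ αt = alcove Δ αt := by
  have hsimp : ∀ s ∈ extBase Δ αt, Tmap w v (Asimp αt s) = Asimp αt (dact w s) ∧
      dact w s ∈ extBase Δ αt := by
    intro s hs
    have hext : Tmap w v (Asimp αt s) ∈ Ext R Δ αt :=
      ext_T_invar w v hT hT' (asimp_mem_ext G hspan hs)
    obtain ⟨s', hs', heq⟩ := ext_eq_asimp G hspan hext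
    have hfst : dact w s = s' := by
      have := congrArg Prod.fst heq
      simpa [Tmap_fst, Asimp] using this
    rw [heq, hfst]
    exact ⟨rfl, hs'⟩
  refine ⟨hsimp, ?_, ?_⟩
  · have hsub : dact w '' extBase Δ αt ⊆ extBase Δ αt := by
      rintro _ ⟨s, hs, rfl⟩
      exact (hsimp s hs).2
    have hfin : (extBase Δ αt).Finite := Set.Finite.insert _ Δ.finite_toSet
    have hle : (extBase Δ αt).ncard ≤ (dact w '' extBase Δ αt).ncard := by
      rw [Set.ncard_image_of_injective _ (dact_injective w)]
    exact Set.eq_of_subset_of_ncard_le hsub hle hfin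
  · apply Set.Subset.antisymm
    · rintro _ ⟨y, hy, rfl⟩
      show w y + v ∈ alcove Δ αt
      rw [alcove_iff_pos G hspan]
      intro a ha
      have ha' : Tmap w⁻¹ (-(w.symm v)) a ∈ Pos R Δ αt := hT' a ha
      have key : evl y (Tmap w⁻¹ (-(w.symm v)) a) = evl (w y + v) a := by
        rw [evl_Tmap]
        have hpt : (w⁻¹ : V ≃ₗ[ℚ] V).symm (y - -(w.symm v)) = w y + v := by
          have h : (w⁻¹ : V ≃ₗ[ℚ] V).symm = w := rfl
          rw [h]
          simp [map_add]
        rw [hpt]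
      rw [← key]
      exact (alcove_iff_pos G hspan y).mp hy _ ha'
    · intro y' hy'
      refine ⟨w.symm (y' - v), ?_, by simp⟩
      rw [alcove_iff_pos G hspan]
      intro a ha
      have key : evl (w.symm (y' - v)) a = evl y' (Tmap w v a) := (evl_Tmap w v a y').symm
      rw [key]
      exact (alcove_iff_pos G hspan y').mp hy' _ (hT a ha)

include G in
lemma T_pos_fix (hspan : Submodule.span ℚ R.Φ = ⊤) {w : V ≃ₗ[ℚ] V} (hw : w ∈ weyl R)
    {v : V} (hv : v ∈ coweightSet R) {x : V} (hx : x ∈ alcove Δ αt)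
    (hfix : w.symm (x - v) = x)
    (hIsub : ∀ s ∈ IOf Δ αt x, dact w s ∈ IOf Δ αt x)
    {a : Dual ℚ V × ℚ} (ha : a ∈ Pos R Δ αt) : Tmap w v a ∈ Pos R Δ αt := by
  classical
  have hTAR : Tmap w v a ∈ AR R := T_AR hw hv ha.1
  have hTx : evl x (Tmap w v a) = evl x a := by
    rw [evl_Tmap, hfix]
  have hax : 0 ≤ evl x a := nonneg_on_alcove G hspan ha hx
  rcases lt_or_eq_of_le hax with hpos | heq0
  · exact pos_of_pos_at_alcove_pt G hTAR hx (by rw [hTx]; exact hpos)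
  · -- a vanishes at x
    obtain ⟨n, hn0, hna⟩ := pos_decomp G hspan ha
    have hsumx : ∑ t ∈ tDel Δ αt, n t * evl x (Asimp αt t) = 0 := by
      have := congrArg (evl x) hna
      rw [map_sum] at this
      simp only [map_smul, smul_eq_mul] at this
      linarith
    have htermnn : ∀ t ∈ tDel Δ αt, 0 ≤ n t * evl x (Asimp αt t) := by
      intro t ht
      apply mul_nonneg (hn0 t)
      rw [evl_Asimp]
      have := hx t (mem_tDel.mp ht)
      linarith
    have hterm0 := (Finset.sum_eq_zero_iff_of_nonneg htermnn).mp hsumx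
    have hkey : ∀ t ∈ tDel Δ αt, n t ≠ 0 →
        Tmap w v (Asimp αt t) = Asimp αt (dact w t) ∧ dact w t ∈ IOf Δ αt x := by
      intro t ht hnt
      have hevt : evl x (Asimp αt t) = 0 := by
        have := hterm0 t ht
        rcases mul_eq_zero.mp this with h | h
        · exact absurd h hnt
        · exact h
      have htI : t ∈ IOf Δ αt x := by
        refine ⟨mem_tDel.mp ht, ?_⟩
        rw [evl_Asimp] at hevt
        linarith
      have hs'I : dact w t ∈ IOf Δ αt x := hIsub t htI
      refine ⟨?_, hs'I⟩
      apply eq_of_fst_evl x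
      · rfl
      · rw [evl_Tmap, hfix, evl_Asimp, evl_Asimp]
        rw [evl_Asimp] at hevt
        have h2 := hs'I.2
        linarith [htI.2]
    refine ⟨hTAR, ?_⟩
    intro y hy
    have hTsum : Tmap w v a = ∑ t ∈ tDel Δ αt, n t • Tmap w v (Asimp αt t) := by
      rw [hna, map_sum]
      apply Finset.sum_congr rfl
      intro t _
      rw [map_smul]
    have hevsum : evl y (Tmap w v a) = ∑ t ∈ tDel Δ αt, n t * evl y (Tmap w v (Asimp αt t)) := by
      rw [hTsum, map_sum]
      apply Finset.sum_congr rfl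
      intro t _
      rw [map_smul, smul_eq_mul]
    rw [hevsum]
    have hexist : ∃ t ∈ tDel Δ αt, n t ≠ 0 := by
      by_contra h
      push_neg at h
      apply ar_ne_zero ha.1
      rw [hna]
      apply Finset.sum_eq_zero
      intro t ht
      rw [h t ht, zero_smul]
    obtain ⟨t₀, ht₀, hnt₀⟩ := hexist
    apply Finset.sum_pos'
    · intro t ht
      by_cases hnt : n t = 0
      · rw [hnt, zero_mul]
      · obtain ⟨heq, hmem⟩ := hkey t ht hnt
        rw [heq, evl_Asimp]
        have := hy (dact w t) hmem.1
        have hn' : 0 < n t := lt_of_le_of_ne (hn0 t) (Ne.symm hnt)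
        nlinarith
    · refine ⟨t₀, ht₀, ?_⟩
      obtain ⟨heq, hmem⟩ := hkey t₀ ht₀ hnt₀
      rw [heq, evl_Asimp]
      have := hy (dact w t₀) hmem.1
      have hn' : 0 < n t₀ := lt_of_le_of_ne (hn0 t₀) (Ne.symm hnt₀)
      nlinarith

end MainLemmas
end QI
-- chunk 9
namespace QI
variable {V : Type*} [AddCommGroup V] [Module ℚ V]

section Directions
variable {R : RootSystemData V} {Δ : Finset (Dual ℚ V)} {αt : Dual ℚ V}
  (G : Good R Δ αt) [FiniteDimensional ℚ V]

include G in
lemma forward_dir (hspan : Submodule.span ℚ R.Φ = ⊤) {L : AddSubgroup V}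
    (hLP : (L : Set V) ⊆ coweightSet R) {x : V} (hx : x ∈ alcove Δ αt)
    {w : V ≃ₗ[ℚ] V} (hw : w ∈ weyl R) (hwL : w x - x ∈ L)
    (hI : dact w '' IOf Δ αt x = IOf Δ αt x) :
    dact w '' extBase Δ αt = extBase Δ αt ∧
    (fun y => w y + (x - w x)) '' alcove Δ αt = alcove Δ αt := by
  set v : V := x - w x with hvdef
  have hvL : v ∈ L := by
    have := L.neg_mem hwL
    rwa [neg_sub] at this
  have hv : v ∈ coweightSet R := hLP hvL
  have hfix : w.symm (x - v) = x := by
    rw [hvdef, sub_sub_cancel]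
    exact w.symm_apply_apply x
  have hIsub : ∀ s ∈ IOf Δ αt x, dact w s ∈ IOf Δ αt x := by
    intro s hs
    rw [← hI]
    exact Set.mem_image_of_mem _ hs
  have hv' : -(w.symm v) ∈ coweightSet R := by
    apply coweight_neg
    have : (w⁻¹ : V ≃ₗ[ℚ] V) v ∈ coweightSet R :=
      weyl_coweight_mem' R (inv_mem hw) hv
    exact this
  have hfix' : (w⁻¹ : V ≃ₗ[ℚ] V).symm (x - (-(w.symm v))) = x := by
    have h : (w⁻¹ : V ≃ₗ[ℚ] V).symm = w := rfl
    rw [h, sub_neg_eq_add, map_add, w.apply_symm_apply, hvdef]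
    abel
  have hIsub' : ∀ s ∈ IOf Δ αt x, dact w⁻¹ s ∈ IOf Δ αt x := by
    intro s hs
    rw [← hI] at hs
    obtain ⟨s₀, hs₀, rfl⟩ := hs
    rw [dact_inv_dact]
    exact hs₀
  have hPP : ∀ b ∈ Pos R Δ αt, Tmap w v b ∈ Pos R Δ αt :=
    fun b hb => T_pos_fix G hspan hw hv hx hfix hIsub hb
  have hPP' : ∀ b ∈ Pos R Δ αt, Tmap w⁻¹ (-(w.symm v)) b ∈ Pos R Δ αt :=
    fun b hb => T_pos_fix G hspan (inv_mem hw) hv' hx hfix' hIsub' hb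
  obtain ⟨_, hext, halc⟩ := imgs_of_pos_preserved G hspan w v hPP hPP'
  exact ⟨hext, halc⟩

include G in
lemma backward_dir (hspan : Submodule.span ℚ R.Φ = ⊤) {x : V} (hx : x ∈ alcove Δ αt)
    {z : V ≃ₗ[ℚ] V} (hz : z ∈ weyl R) {v : V} (hv : v ∈ coweightSet R)
    (hvx : v = x - z x)
    (himg : (fun y => z y + v) '' alcove Δ αt = alcove Δ αt) :
    dact z '' IOf Δ αt x = IOf Δ αt x := by
  have halc : ∀ y ∈ alcove Δ αt, z y + v ∈ alcove Δ αt := by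
    intro y hy
    have : z y + v ∈ (fun y => z y + v) '' alcove Δ αt := Set.mem_image_of_mem _ hy
    rwa [himg] at this
  have halc' : ∀ y' ∈ alcove Δ αt, z.symm (y' - v) ∈ alcove Δ αt := by
    intro y' hy'
    rw [← himg] at hy'
    obtain ⟨y, hy, hyeq⟩ := hy'
    have : z.symm (y' - v) = y := by
      simp only at hyeq
      rw [← hyeq]
      simp
    rwa [this]
  have hv' : -(z.symm v) ∈ coweightSet R := by
    apply coweight_neg
    have : (z⁻¹ : V ≃ₗ[ℚ] V) v ∈ coweightSet R :=
      weyl_coweight_mem' R (inv_mem hz) hv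
    exact this
  have hpt : ∀ y : V, (z⁻¹ : V ≃ₗ[ℚ] V).symm (y - -(z.symm v)) = z y + v := by
    intro y
    have h : (z⁻¹ : V ≃ₗ[ℚ] V).symm = z := rfl
    rw [h, sub_neg_eq_add, map_add, z.apply_symm_apply]
  have hint' : ∀ y ∈ intAlc Δ αt, z.symm (y - v) ∈ intAlc Δ αt := by
    intro y hy
    rw [intAlc_iff_alcove G]
    refine ⟨halc' y (intAlc_subset_alcove hy), ?_⟩
    intro a ha
    have key : evl (z.symm (y - v)) a = evl y (Tmap z v a) := (evl_Tmap z v a y).symm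
    rw [key]
    exact evl_ne_zero_AR G (T_AR hz hv ha) hy
  have hint : ∀ y ∈ intAlc Δ αt, z y + v ∈ intAlc Δ αt := by
    intro y hy
    rw [intAlc_iff_alcove G]
    refine ⟨halc y (intAlc_subset_alcove hy), ?_⟩
    intro a ha
    have key : evl (z y + v) a = evl y (Tmap z⁻¹ (-(z.symm v)) a) := by
      rw [evl_Tmap, hpt y]
    rw [key]
    exact evl_ne_zero_AR G (T_AR (inv_mem hz) hv' ha) hy
  have hPP : ∀ b ∈ Pos R Δ αt, Tmap z v b ∈ Pos R Δ αt := by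
    intro b hb
    refine ⟨T_AR hz hv hb.1, ?_⟩
    intro y hy
    rw [evl_Tmap]
    exact hb.2 _ (hint' y hy)
  have hPP' : ∀ b ∈ Pos R Δ αt, Tmap z⁻¹ (-(z.symm v)) b ∈ Pos R Δ αt := by
    intro b hb
    refine ⟨T_AR (inv_mem hz) hv' hb.1, ?_⟩
    intro y hy
    rw [evl_Tmap, hpt y]
    exact hb.2 _ (hint y hy)
  obtain ⟨hsimp, _, _⟩ := imgs_of_pos_preserved G hspan z v hPP hPP'
  have hfix : z.symm (x - v) = x := by
    rw [hvx, sub_sub_cancel]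
    exact z.symm_apply_apply x
  have hsub : dact z '' IOf Δ αt x ⊆ IOf Δ αt x := by
    rintro _ ⟨s, hsI, rfl⟩
    have hsE : s ∈ extBase Δ αt := hsI.1
    obtain ⟨heq, hmem⟩ := hsimp s hsE
    refine ⟨hmem, ?_⟩
    have hev : evl x (Asimp αt (dact z s)) = evl x (Asimp αt s) := by
      rw [← heq, evl_Tmap, hfix]
    rw [evl_Asimp, evl_Asimp] at hev
    have hs2 := hsI.2
    linarith
  have hfinI : (IOf Δ αt x).Finite :=
    Set.Finite.subset (Set.Finite.insert _ Δ.finite_toSet) (fun a ha => ha.1)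
  have hle : (IOf Δ αt x).ncard ≤ (dact z '' IOf Δ αt x).ncard := by
    rw [Set.ncard_image_of_injective _ (dact_injective z)]
  exact Set.eq_of_subset_of_ncard_le hsub hle hfinI

end Directions
end QI

/-- For λ ∈ C, the group A_L(λ) = {w ∈ W | w(λ)−λ ∈ L, w(I_λ) = I_λ}
equals {z ∈ 𝒜 | λ − z(λ) ∈ L and z(C) + (λ − z(λ)) = C}. In particular every such w
stabilizes Δ̃ and satisfies ϖ∨(w) = λ − w(λ). -/
theorem A_L_lambda_eq_diagram_automorphisms
    {V : Type*} [AddCommGroup V] [Module ℚ V] [FiniteDimensional ℚ V]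
    (R : RootSystemData V)
    (Δ : Finset (Module.Dual ℚ V))
    (hΔΦ : (Δ : Set (Module.Dual ℚ V)) ⊆ R.Φ)
    (hΔind : LinearIndependent ℚ
      (fun x : (Δ : Set (Module.Dual ℚ V)) => (x : Module.Dual ℚ V)))
    (hΔbase : ∀ α ∈ R.Φ, ∃ c : Module.Dual ℚ V →₀ ℤ,
        (c.support : Set (Module.Dual ℚ V)) ⊆ (Δ : Set (Module.Dual ℚ V)) ∧
        α = c.sum (fun β k => (k : ℚ) • β) ∧
        ((∀ β, 0 ≤ c β) ∨ (∀ β, c β ≤ 0)))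
    (αt : Module.Dual ℚ V) (hαtΦ : αt ∈ R.Φ)
    (hhigh : ∀ γ ∈ R.Φ, ∃ c : Module.Dual ℚ V →₀ ℚ,
        (c.support : Set (Module.Dual ℚ V)) ⊆ (Δ : Set (Module.Dual ℚ V)) ∧
        αt - γ = c.sum (fun β k => k • β) ∧ (∀ β, 0 ≤ c β))
    (hα₀ : -αt ∉ (Δ : Set (Module.Dual ℚ V)))
    (L : AddSubgroup V)
    (hQL : (corootLattice R : Set V) ⊆ (L : Set V))
    (hLP : (L : Set V) ⊆ coweightSet R)
    (x : V) (hx : x ∈ alcove Δ αt) :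
    ({w : V ≃ₗ[ℚ] V | w ∈ weyl R ∧ w x - x ∈ L ∧
        dact w '' IOf Δ αt x = IOf Δ αt x}
      = {z : V ≃ₗ[ℚ] V | z ∈ AutTilde R Δ αt ∧ x - z x ∈ L ∧
          (fun v => z v + (x - z x)) '' alcove Δ αt = alcove Δ αt}) ∧
    ∀ w : V ≃ₗ[ℚ] V, w ∈ weyl R → w x - x ∈ L →
      dact w '' IOf Δ αt x = IOf Δ αt x →
        dact w '' extBase Δ αt = extBase Δ αt ∧
        (fun v => w v + (x - w x)) '' alcove Δ αt = alcove Δ αt := by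
  have G : QI.Good R Δ αt := ⟨hΔΦ, hΔind, hΔbase, hαtΦ, hhigh, hα₀⟩
  have hspan := R.span_eq_top
  have hfwd : ∀ w : V ≃ₗ[ℚ] V, w ∈ weyl R → w x - x ∈ L →
      dact w '' IOf Δ αt x = IOf Δ αt x →
        dact w '' extBase Δ αt = extBase Δ αt ∧
        (fun v => w v + (x - w x)) '' alcove Δ αt = alcove Δ αt := by
    intro w hw hwL hI
    exact QI.forward_dir G hspan hLP hx hw hwL hI
  refine ⟨?_, hfwd⟩
  ext z
  simp only [Set.mem_setOf_eq]
  constructor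
  · rintro ⟨hw, hwL, hI⟩
    obtain ⟨hext, halc⟩ := hfwd z hw hwL hI
    have hxz : x - z x ∈ L := by
      have := L.neg_mem hwL
      rwa [neg_sub] at this
    exact ⟨⟨hw, hext⟩, hxz, halc⟩
  · rintro ⟨⟨hz, hzext⟩, hzL, hzalc⟩
    have hwx : z x - x ∈ L := by
      have := L.neg_mem hzL
      rwa [neg_sub] at this
    exact ⟨hz, hwx, QI.backward_dir G hspan hx hz (hLP hzL) rfl hzalc⟩
end

section
/- Let I be a subset of Δ̃ with I ≠ Δ̃, let W_I be the subgroup of W generated by the reflections s_α with α ∈ I, and let A be a subgroup of 𝒜 such that z(I) = I for every z ∈ A. Then the dimension over ℚ of the space of vectors of V fixed simultaneously by every element of A and every element of W_I equals (the number of orbits of A on Δ̃ ∖ I) − 1. -/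
open Module

variable {V : Type*} [AddCommGroup V] [Module ℚ V]

/-- Let I ⊊ Δ̃ and let A ≤ 𝒜 stabilize I. Then the dimension of the
space of vectors fixed by every element of A and of W_I equals (number of orbits of A
on Δ̃ ∖ I) − 1. -/
theorem finrank_fixed_of_A_and_WI
    {V : Type*} [AddCommGroup V] [Module ℚ V] [FiniteDimensional ℚ V]
    (R : RootSystemData V)
    (Δ : Finset (Module.Dual ℚ V))
    (hΔΦ : (Δ : Set (Module.Dual ℚ V)) ⊆ R.Φ)
    (hΔind : LinearIndependent ℚ
      (fun x : (Δ : Set (Module.Dual ℚ V)) => (x : Module.Dual ℚ V)))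
    (hΔbase : ∀ α ∈ R.Φ, ∃ c : Module.Dual ℚ V →₀ ℤ,
        (c.support : Set (Module.Dual ℚ V)) ⊆ (Δ : Set (Module.Dual ℚ V)) ∧
        α = c.sum (fun β k => (k : ℚ) • β) ∧
        ((∀ β, 0 ≤ c β) ∨ (∀ β, c β ≤ 0)))
    (αt : Module.Dual ℚ V) (hαtΦ : αt ∈ R.Φ)
    (hhigh : ∀ γ ∈ R.Φ, ∃ c : Module.Dual ℚ V →₀ ℚ,
        (c.support : Set (Module.Dual ℚ V)) ⊆ (Δ : Set (Module.Dual ℚ V)) ∧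
        αt - γ = c.sum (fun β k => k • β) ∧ (∀ β, 0 ≤ c β))
    (hα₀ : -αt ∉ (Δ : Set (Module.Dual ℚ V)))
    (I : Set (Module.Dual ℚ V)) (hI : I ⊆ extBase Δ αt) (hIne : I ≠ extBase Δ αt)
    (A : Subgroup (V ≃ₗ[ℚ] V))
    (hA : (A : Set (V ≃ₗ[ℚ] V)) ⊆ AutTilde R Δ αt)
    (hAI : ∀ z ∈ A, dact z '' I = I) :
    Module.finrank ℚ
        (fixedSub ((A : Set (V ≃ₗ[ℚ] V)) ∪ (weylOf R I : Set (V ≃ₗ[ℚ] V)))) + 1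
      = (orbitsOn A (extBase Δ αt \ I)).ncard := by
  classical
  -- Basic membership facts about the extended base
  have hnegΦ : -αt ∈ R.Φ := by
    have h := R.dual_refl_mem αt hαtΦ αt hαtΦ
    rw [R.pairing_self αt hαtΦ] at h
    have : αt - (2 : ℚ) • αt = -αt := by module
    rwa [this] at h
  have hEΦ : ∀ α ∈ extBase Δ αt, α ∈ R.Φ := by
    intro α hα
    rcases hα with h | h
    · rw [h]; exact hnegΦ
    · exact hΔΦ h
  have hEf : ∀ α : Module.Dual ℚ V,
      α ∈ extBase Δ αt ↔ α ∈ (insert (-αt) Δ : Finset (Module.Dual ℚ V)) := by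
    intro α
    simp [extBase, Finset.mem_insert]
  set Ef : Finset (Module.Dual ℚ V) := insert (-αt) Δ with hEfdef
  have hα₀f : -αt ∉ Δ := fun h => hα₀ h
  -- Δ spans the dual space
  have hαtspan : αt ∈ Submodule.span ℚ (Δ : Set (Module.Dual ℚ V)) := by
    obtain ⟨c, hcs, hcsum, -⟩ := hΔbase αt hαtΦ
    rw [hcsum, Finsupp.sum]
    exact Submodule.sum_mem _ fun β hβ =>
      Submodule.smul_mem _ _ (Submodule.subset_span (hcs hβ))
  have hspan : Submodule.span ℚ (Δ : Set (Module.Dual ℚ V)) = ⊤ := by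
    rw [← top_le_iff, ← R.span_eq_top, Submodule.span_le]
    intro γ hγ
    obtain ⟨c, hcs, hcsum, -⟩ := hhigh γ hγ
    have h2 : αt - γ ∈ Submodule.span ℚ (Δ : Set (Module.Dual ℚ V)) := by
      rw [hcsum, Finsupp.sum]
      exact Submodule.sum_mem _ fun β hβ =>
        Submodule.smul_mem _ _ (Submodule.subset_span (hcs hβ))
    have h3 : γ = αt - (αt - γ) := by abel
    rw [SetLike.mem_coe, h3]
    exact Submodule.sub_mem _ hαtspan h2
  -- the basis of the dual space given by Δ
  haveI : Fintype ↥(Δ : Set (Module.Dual ℚ V)) := (Δ.finite_toSet).fintype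
  set B : Basis ↥(Δ : Set (Module.Dual ℚ V)) ℚ (Module.Dual ℚ V) :=
    Basis.mk hΔind (by rw [Subtype.range_coe, hspan]) with hBdef
  have hB : ∀ i, B i = ↑i := fun i => Basis.mk_apply _ _ i
  have hreprB : ∀ (β : Module.Dual ℚ V) (hβ : β ∈ (Δ : Set (Module.Dual ℚ V))),
      B.repr β = Finsupp.single ⟨β, hβ⟩ 1 := by
    intro β hβ
    have h := B.repr_self (⟨β, hβ⟩ : ↥(Δ : Set (Module.Dual ℚ V)))
    rw [hB ⟨β, hβ⟩] at h
    exact h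
  have hrepr : ∀ (c : Module.Dual ℚ V →₀ ℚ), (↑c.support ⊆ (Δ : Set (Module.Dual ℚ V))) →
      ∀ (γ : Module.Dual ℚ V) (hγ : γ ∈ (Δ : Set (Module.Dual ℚ V))),
      B.repr (c.sum fun β k => k • β) ⟨γ, hγ⟩ = c γ := by
    intro c hc γ hγ
    rw [Finsupp.sum, map_sum]
    have h1 : ∀ β ∈ c.support, B.repr (c β • β) ⟨γ, hγ⟩
        = if β = γ then c β else 0 := by
      intro β hβ
      rw [map_smul, hreprB β (hc hβ)]
      simp only [Finsupp.smul_single, smul_eq_mul, mul_one, Finsupp.single_apply,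
        Subtype.mk.injEq]
    rw [Finsupp.finset_sum_apply, Finset.sum_congr rfl h1, Finset.sum_ite_eq' c.support γ]
    by_cases h : γ ∈ c.support
    · simp [h]
    · simp [h, Finsupp.notMem_support_iff.mp h]
  have hzero : ∀ v : V, (∀ β ∈ (Δ : Set (Module.Dual ℚ V)), β v = 0) → v = 0 := by
    intro v hv
    rw [← Module.forall_dual_apply_eq_zero_iff ℚ v]
    intro f
    have hf : f ∈ Submodule.span ℚ (Δ : Set (Module.Dual ℚ V)) := by rw [hspan]; trivial
    induction hf using Submodule.span_induction with
    | mem x hx => exact hv x hx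
    | zero => rfl
    | add a b _ _ ha hb => simp [LinearMap.add_apply, ha, hb]
    | smul c a _ ha => simp [LinearMap.smul_apply, ha]
  -- dual vectors
  set d : Basis ↥(Δ : Set (Module.Dual ℚ V)) ℚ V :=
    B.dualBasis.map (Module.evalEquiv ℚ V).symm with hddef
  have hd : ∀ (i j : ↥(Δ : Set (Module.Dual ℚ V))), B i (d j) = if i = j then 1 else 0 := by
    intro i j
    have h1 : Module.evalEquiv ℚ V (d j) = B.dualBasis j := by
      simp [hddef, Basis.map_apply]
    have h2 : Module.evalEquiv ℚ V (d j) (B i) = B i (d j) := by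
      simp [Module.evalEquiv_apply]
    rw [← h2, h1, B.dualBasis_apply_self]
  -- the coefficients of the highest root
  set N : Module.Dual ℚ V → ℚ := fun β =>
    if h : β ∈ (Δ : Set (Module.Dual ℚ V)) then B.repr αt ⟨β, h⟩ else 0 with hNdef
  have hαtsum : ∑ β ∈ Δ, N β • β = αt := by
    have hs := B.sum_repr αt
    rw [← hs, ← Finset.sum_coe_sort Δ (fun β => N β • β)]
    apply @Fintype.sum_equiv _ _ _ (Finset.Subtype.fintype Δ) this _ (Equiv.subtypeEquivRight (fun x => by simp))
    intro i
    rw [hB]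
    have hi : (↑i : Module.Dual ℚ V) ∈ (Δ : Set (Module.Dual ℚ V)) := by
      simpa using i.2
    simp only [hNdef, dif_pos hi]
    rfl
  have hN1 : ∀ β ∈ Δ, (1 : ℚ) ≤ N β := by
    intro β hβ
    have hβ' : β ∈ (Δ : Set (Module.Dual ℚ V)) := hβ
    obtain ⟨c, hcs, hcsum, hcpos⟩ := hhigh β (hΔΦ hβ')
    have h1 : B.repr (αt - β) ⟨β, hβ'⟩ = c β := by
      rw [hcsum]; exact hrepr c hcs β hβ'
    rw [map_sub, hreprB β hβ'] at h1
    have h2 : N β = B.repr αt ⟨β, hβ'⟩ := by simp only [hNdef, dif_pos hβ']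
    have h3 : (Finsupp.single (⟨β, hβ'⟩ : ↥(Δ : Set (Module.Dual ℚ V))) (1:ℚ)) ⟨β, hβ'⟩
        = 1 := by simp
    rw [Finsupp.sub_apply, h3] at h1
    have := hcpos β
    rw [h2]
    linarith
  -- the extended coefficients, summing to zero against the extended base
  set Nn : Module.Dual ℚ V → ℚ := fun α => if α = -αt then 1 else N α with hNndef
  have hNnΔ : ∀ β ∈ Δ, Nn β = N β := by
    intro β hβ
    have : β ≠ -αt := fun h => hα₀f (h ▸ hβ)
    simp only [hNndef, if_neg this]
  have hNnpos : ∀ α ∈ Ef, (0 : ℚ) < Nn α := by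
    intro α hα
    rcases Finset.mem_insert.mp hα with h | h
    · simp [hNndef, h]
    · rw [hNnΔ α h]; linarith [hN1 α h]
  have hEfsum : ∑ α ∈ Ef, Nn α • α = 0 := by
    rw [hEfdef, Finset.sum_insert hα₀f]
    have h1 : Nn (-αt) = 1 := by simp [hNndef]
    rw [h1, Finset.sum_congr rfl (fun β hβ => by rw [hNnΔ β hβ]), hαtsum]
    module
  have hEfsum' : ∀ v : V, ∑ α ∈ Ef, Nn α * α v = 0 := by
    intro v
    have h := congrArg (fun f : Module.Dual ℚ V => f v) hEfsum
    simpa using h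
  -- orbit machinery
  set orb : Module.Dual ℚ V → Set (Module.Dual ℚ V) :=
    fun α => {β | ∃ z ∈ A, dact z α = β} with horbdef
  have hdact_mul : ∀ (z w : V ≃ₗ[ℚ] V) β, dact (z*w) β = dact z (dact w β) :=
    fun _ _ _ => rfl
  have hdact_linv : ∀ (z : V ≃ₗ[ℚ] V) α, dact z⁻¹ (dact z α) = α := by
    intro z α
    rw [← hdact_mul, inv_mul_cancel]
    rfl
  have horb_self : ∀ α, α ∈ orb α := fun α => ⟨1, A.one_mem, rfl⟩
  have horb_eq : ∀ α β, β ∈ orb α → orb β = orb α := by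
    rintro α β ⟨z, hz, hzβ⟩
    ext γ
    constructor
    · rintro ⟨w, hw, rfl⟩
      exact ⟨w * z, A.mul_mem hw hz, by rw [hdact_mul, hzβ]⟩
    · rintro ⟨w, hw, rfl⟩
      refine ⟨w * z⁻¹, A.mul_mem hw (A.inv_mem hz), ?_⟩
      rw [hdact_mul, ← hzβ, hdact_linv]
  have hdactE : ∀ z ∈ A, ∀ α ∈ extBase Δ αt, dact z α ∈ extBase Δ αt := by
    intro z hz α hα
    have h := (hA hz).2
    rw [← h]
    exact ⟨α, hα, rfl⟩
  have hdactI : ∀ z ∈ A, ∀ α ∈ I, dact z α ∈ I := by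
    intro z hz α hα
    rw [← hAI z hz]
    exact ⟨α, hα, rfl⟩
  have hdactEI : ∀ z ∈ A, ∀ α ∈ extBase Δ αt \ I, dact z α ∈ extBase Δ αt \ I := by
    rintro z hz α ⟨hαE, hαI⟩
    refine ⟨hdactE z hz α hαE, fun hin => hαI ?_⟩
    have h := hdactI z⁻¹ (A.inv_mem hz) _ hin
    rwa [hdact_linv] at h
  have horb_sub : ∀ α ∈ extBase Δ αt \ I, orb α ⊆ extBase Δ αt \ I := by
    rintro α hα β ⟨z, hz, rfl⟩
    exact hdactEI z hz α hα
  have hOdef : orbitsOn A (extBase Δ αt \ I) = orb '' (extBase Δ αt \ I) := by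
    ext Ω
    constructor
    · rintro ⟨α, hα, rfl⟩; exact ⟨α, hα, rfl⟩
    · rintro ⟨α, hα, rfl⟩; exact ⟨α, hα, rfl⟩
  have hEIfin : (extBase Δ αt \ I).Finite :=
    Set.Finite.subset (Set.Finite.insert (-αt) Δ.finite_toSet) Set.diff_subset
  have hOfin : (orbitsOn A (extBase Δ αt \ I)).Finite := by
    rw [hOdef]; exact hEIfin.image orb
  set OF : Finset (Set (Module.Dual ℚ V)) := hOfin.toFinset with hOFdef
  have hOF : ∀ Ω, Ω ∈ OF ↔ ∃ α ∈ extBase Δ αt \ I, orb α = Ω := by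
    intro Ω
    rw [hOFdef, Set.Finite.mem_toFinset, hOdef]
    constructor
    · rintro ⟨α, hα, rfl⟩; exact ⟨α, hα, rfl⟩
    · rintro ⟨α, hα, rfl⟩; exact ⟨α, hα, rfl⟩
  have hΩsub : ∀ Ω ∈ OF, Ω ⊆ extBase Δ αt \ I := by
    intro Ω hΩ
    obtain ⟨α, hα, rfl⟩ := (hOF Ω).mp hΩ
    exact horb_sub α hα
  have hmem_eq : ∀ Ω ∈ OF, ∀ α ∈ Ω, orb α = Ω := by
    intro Ω hΩ α hα
    obtain ⟨γ, hγ, rfl⟩ := (hOF Ω).mp hΩ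
    exact horb_eq γ α hα
  have hrepex : ∀ Ω ∈ OF, ∃ α, α ∈ extBase Δ αt \ I ∧ orb α = Ω := by
    intro Ω hΩ
    obtain ⟨α, hα, rfl⟩ := (hOF Ω).mp hΩ
    exact ⟨α, hα, rfl⟩
  choose rep hrepEI hreporb using hrepex
  have hrepmem : ∀ Ω (hΩ : Ω ∈ OF), rep Ω hΩ ∈ Ω := by
    intro Ω hΩ
    have h := horb_self (rep Ω hΩ)
    rwa [hreporb Ω hΩ] at h
  -- fixed space characterization
  set F : Submodule ℚ V :=
    fixedSub ((A : Set (V ≃ₗ[ℚ] V)) ∪ (weylOf R I : Set (V ≃ₗ[ℚ] V))) with hFdef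
  have hmemF : ∀ v : V, v ∈ F ↔
      ∀ w ∈ (A : Set (V ≃ₗ[ℚ] V)) ∪ (weylOf R I : Set (V ≃ₗ[ℚ] V)), w v = v := fun v =>
    Iff.rfl
  have hWIfix : ∀ v : V, (∀ α ∈ I, α v = 0) → ∀ w ∈ weylOf R I, w v = v := by
    intro v hv w hw
    induction hw using Subgroup.closure_induction with
    | mem x hx =>
      obtain ⟨α, hα, hxv⟩ := hx
      rw [hxv v, hv α hα]
      simp
    | one => rfl
    | mul a b _ _ ha hb =>
      show a (b v) = v
      rw [hb, ha]
    | inv a _ ha =>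
      show a.symm v = v
      conv_lhs => rw [← ha]
      exact a.symm_apply_apply v
  have hWIzero : ∀ v ∈ F, ∀ α ∈ I, α v = 0 := by
    intro v hv α hα
    have hαΦ : α ∈ R.Φ := hEΦ α (hI hα)
    have h2 : α (R.coroot α) = 2 := R.pairing_self α hαΦ
    set f : V →ₗ[ℚ] V := LinearMap.id - α.smulRight (R.coroot α) with hfdef
    have hff : f.comp f = LinearMap.id := by
      ext u
      simp [hfdef, h2, smul_smul, smul_sub, sub_smul]
      module
    set e : V ≃ₗ[ℚ] V := LinearEquiv.ofLinear f f hff hff with hedef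
    have he : e ∈ weylOf R I := Subgroup.subset_closure ⟨α, hα, fun u => rfl⟩
    have h3 := hv e (Or.inr he)
    have h4 : v - α v • R.coroot α = v := h3
    have h5 : α v • R.coroot α = 0 := by
      have := sub_eq_self.mp h4
      exact this
    have h6 := congrArg α h5
    rw [map_smul, h2] at h6
    simp only [map_zero, smul_eq_mul] at h6
    linarith
  have hAconst : ∀ v ∈ F, ∀ z ∈ A, ∀ γ : Module.Dual ℚ V, dact z γ v = γ v := by
    intro v hv z hz γ
    have h1 : (z⁻¹ : V ≃ₗ[ℚ] V) v = v := hv z⁻¹ (Or.inl (A.inv_mem hz))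
    have h2 : dact z γ v = γ ((z⁻¹ : V ≃ₗ[ℚ] V) v) := rfl
    rw [h2, h1]
  have horbconst : ∀ v ∈ F, ∀ α β : Module.Dual ℚ V, β ∈ orb α → β v = α v := by
    rintro v hv α β ⟨z, hz, rfl⟩
    exact hAconst v hv z hz α
  -- grouping sums over orbits
  have hgroup : ∀ f : Module.Dual ℚ V → ℚ, (∀ α ∈ Ef, α ∈ I → f α = 0) →
      ∑ Ω ∈ OF, ∑ α ∈ Ef.filter (· ∈ Ω), f α = ∑ α ∈ Ef, f α := by
    intro f hf
    set S : Finset (Module.Dual ℚ V) := Ef.filter (· ∉ I) with hSdef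
    have h1 : ∑ α ∈ S, f α = ∑ α ∈ Ef, f α := by
      apply Finset.sum_filter_of_ne
      intro x hx hfx hxI
      exact hfx (hf x hx hxI)
    have hSmem : ∀ α ∈ S, α ∈ extBase Δ αt \ I := by
      intro α hα
      rw [hSdef, Finset.mem_filter] at hα
      exact ⟨(hEf α).mpr hα.1, hα.2⟩
    have hmap : ∀ α ∈ S, orb α ∈ OF := by
      intro α hα
      exact (hOF (orb α)).mpr ⟨α, hSmem α hα, rfl⟩
    have h2 := Finset.sum_fiberwise_of_maps_to hmap f
    rw [← h1, ← h2]
    apply Finset.sum_congr rfl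
    intro Ω hΩ
    apply Finset.sum_congr _ (fun _ _ => rfl)
    ext α
    simp only [hSdef, Finset.mem_filter]
    constructor
    · rintro ⟨hαEf, hαΩ⟩
      have hsub := hΩsub Ω hΩ hαΩ
      exact ⟨⟨hαEf, hsub.2⟩, hmem_eq Ω hΩ α hαΩ⟩
    · rintro ⟨⟨hαEf, hαI⟩, hαorb⟩
      refine ⟨hαEf, ?_⟩
      rw [← hαorb]
      exact horb_self α
  -- the linear maps
  set wgt : Set (Module.Dual ℚ V) → ℚ := fun Ω => ∑ α ∈ Ef.filter (· ∈ Ω), Nn α with hwgtdef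
  set Ψ : V →ₗ[ℚ] ({Ω // Ω ∈ OF} → ℚ) := LinearMap.pi (fun Ω => rep ↑Ω Ω.2) with hΨdef
  set L : ({Ω // Ω ∈ OF} → ℚ) →ₗ[ℚ] ℚ :=
    ∑ Ω : {Ω // Ω ∈ OF}, wgt ↑Ω • LinearMap.proj Ω with hLdef
  set Ψ' : F →ₗ[ℚ] ({Ω // Ω ∈ OF} → ℚ) := Ψ.comp F.subtype with hΨ'def
  have hΨapp : ∀ (v : V) (Ω : {Ω // Ω ∈ OF}), Ψ v Ω = rep ↑Ω Ω.2 v := fun _ _ => rfl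
  have hLapp : ∀ x, L x = ∑ Ω : {Ω // Ω ∈ OF}, wgt ↑Ω * x Ω := by
    intro x
    rw [hLdef]
    rw [LinearMap.sum_apply]
    apply Finset.sum_congr rfl
    intro Ω _
    rw [LinearMap.smul_apply, LinearMap.proj_apply, smul_eq_mul]
  -- injectivity
  have hinj : Function.Injective Ψ' := by
    rw [← LinearMap.ker_eq_bot]
    rw [eq_bot_iff]
    rintro u hu
    rw [LinearMap.mem_ker] at hu
    rw [Submodule.mem_bot]
    apply Subtype.ext
    apply hzero
    intro β hβΔ
    by_cases hβI : β ∈ I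
    · exact hWIzero ↑u u.2 β hβI
    · have hβEI : β ∈ extBase Δ αt \ I := ⟨Or.inr hβΔ, hβI⟩
      have hΩm : orb β ∈ OF := (hOF _).mpr ⟨β, hβEI, rfl⟩
      have h1 : rep (orb β) hΩm ∈ orb β := hrepmem _ hΩm
      have h2 : rep (orb β) hΩm ↑u = β ↑u := horbconst ↑u u.2 β _ h1
      have h3 : Ψ' u ⟨orb β, hΩm⟩ = 0 := by rw [hu]; rfl
      have h4 : Ψ' u ⟨orb β, hΩm⟩ = rep (orb β) hΩm ↑u := rfl
      rw [h4, h2] at h3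
      exact h3
  -- the range of the restricted map is the kernel of L
  have hrange : LinearMap.range Ψ' = LinearMap.ker L := by
    apply le_antisymm
    · rintro x ⟨u, rfl⟩
      rw [LinearMap.mem_ker, hLapp]
      have hterm : ∀ Ω : {Ω // Ω ∈ OF}, wgt ↑Ω * Ψ' u Ω
          = ∑ α ∈ Ef.filter (· ∈ (↑Ω : Set (Module.Dual ℚ V))), Nn α * α ↑u := by
        intro Ω
        have h4 : Ψ' u Ω = rep ↑Ω Ω.2 ↑u := rfl
        rw [h4, hwgtdef, Finset.sum_mul]
        apply Finset.sum_congr rfl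
        intro α hα
        have hαΩ : α ∈ (↑Ω : Set (Module.Dual ℚ V)) := (Finset.mem_filter.mp hα).2
        rw [← hreporb ↑Ω Ω.2] at hαΩ
        rw [horbconst ↑u u.2 (rep ↑Ω Ω.2) α hαΩ]
      rw [Finset.sum_congr rfl (fun Ω _ => hterm Ω)]
      rw [Finset.sum_coe_sort OF (fun Ω => ∑ α ∈ Ef.filter (· ∈ Ω), Nn α * α ↑u)]
      rw [hgroup (fun α => Nn α * α ↑u)
        (fun α _ hαI => by show Nn α * α ↑u = 0; rw [hWIzero ↑u u.2 α hαI]; ring)]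
      exact hEfsum' ↑u
    · intro x hx
      rw [LinearMap.mem_ker] at hx
      set y : Module.Dual ℚ V → ℚ :=
        fun α => ∑ Ω : {Ω // Ω ∈ OF},
          if α ∈ (↑Ω : Set (Module.Dual ℚ V)) then x Ω else 0 with hydef
      have hyI : ∀ α ∈ I, y α = 0 := by
        intro α hα
        show (∑ Ω : {Ω // Ω ∈ OF},
          if α ∈ (↑Ω : Set (Module.Dual ℚ V)) then x Ω else 0) = 0
        apply Finset.sum_eq_zero
        intro Ω _
        have hn : α ∉ (↑Ω : Set (Module.Dual ℚ V)) := fun hmem => (hΩsub ↑Ω Ω.2 hmem).2 hα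
        simp [hn]
      have hyorb : ∀ (Ω : {Ω // Ω ∈ OF}) (α : Module.Dual ℚ V),
          α ∈ (↑Ω : Set (Module.Dual ℚ V)) → y α = x Ω := by
        intro Ω α hα
        show (∑ Ω' : {Ω // Ω ∈ OF},
          if α ∈ (↑Ω' : Set (Module.Dual ℚ V)) then x Ω' else 0) = x Ω
        rw [Finset.sum_eq_single_of_mem Ω (Finset.mem_univ Ω)]
        · simp [hα]
        · intro Ω' _ hne
          have hn : α ∉ (↑Ω' : Set (Module.Dual ℚ V)) := by
            intro hmem
            apply hne
            apply Subtype.ext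
            rw [← hmem_eq ↑Ω' Ω'.2 α hmem, ← hmem_eq ↑Ω Ω.2 α hα]
          simp [hn]
      set v : V := ∑ i : ↥(Δ : Set (Module.Dual ℚ V)), y ↑i • d i with hvdef
      have hvΔ : ∀ β (hβ : β ∈ (Δ : Set (Module.Dual ℚ V))), β v = y β := by
        intro β hβ
        have hβB : β = B ⟨β, hβ⟩ := by rw [hB]
        rw [hβB, hvdef, map_sum]
        simp only [map_smul, hd, smul_eq_mul]
        rw [Finset.sum_eq_single (⟨β, hβ⟩ : ↥(Δ : Set (Module.Dual ℚ V)))]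
        · rw [← hβB]; simp
        · intro j _ hj; simp [Ne.symm hj]
        · simp
      have hxL : ∑ Ω : {Ω // Ω ∈ OF}, wgt ↑Ω * x Ω = 0 := by rw [← hLapp]; exact hx
      have hsum1 : ∑ α ∈ Ef, Nn α * y α = 0 := by
        rw [← hgroup (fun α => Nn α * y α) (fun α _ hαI => by show Nn α * y α = 0; rw [hyI α hαI]; ring)]
        rw [← Finset.sum_coe_sort OF (fun Ω => ∑ α ∈ Ef.filter (· ∈ Ω), Nn α * y α)]
        rw [← hxL]
        apply Finset.sum_congr rfl
        intro Ω _
        rw [hwgtdef, Finset.sum_mul]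
        apply Finset.sum_congr rfl
        intro α hα
        rw [hyorb Ω α (Finset.mem_filter.mp hα).2]
      have hvE : ∀ α, α ∈ Ef → α v = y α := by
        intro α hα
        rcases Finset.mem_insert.mp hα with h | h
        · subst h
          have h1 := hEfsum' v
          rw [hEfdef, Finset.sum_insert hα₀f] at h1 hsum1
          have hNn1 : Nn (-αt) = 1 := by simp [hNndef]
          have h2 : ∑ β ∈ Δ, Nn β * β v = ∑ β ∈ Δ, Nn β * y β :=
            Finset.sum_congr rfl (fun β hβ => by rw [hvΔ β hβ])
          rw [hNn1, one_mul] at h1 hsum1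
          linarith
        · exact hvΔ α h
      have hvF : v ∈ F := by
        rw [hmemF]
        intro w hw
        rcases hw with hz | hw
        · have hzA : w ∈ A := hz
          have key : ∀ β, β ∈ (Δ : Set (Module.Dual ℚ V)) → β (w v) - β v = 0 := by
            intro β hβ
            have hβE : β ∈ extBase Δ αt := Or.inr hβ
            have hγE : dact w⁻¹ β ∈ extBase Δ αt := hdactE w⁻¹ (A.inv_mem hzA) β hβE
            have hγEf : dact w⁻¹ β ∈ Ef := (hEf _).mp hγE
            have hβEf : β ∈ Ef := (hEf _).mp hβE
            have h0 : β (w v) = dact w⁻¹ β v := rfl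
            rw [h0, hvE _ hγEf, hvE _ hβEf]
            by_cases hβI : β ∈ I
            · rw [hyI _ hβI, hyI _ (hdactI w⁻¹ (A.inv_mem hzA) β hβI)]
              ring
            · have hβEI : β ∈ extBase Δ αt \ I := ⟨hβE, hβI⟩
              have hΩm : orb β ∈ OF := (hOF _).mpr ⟨β, hβEI, rfl⟩
              have hγorb : dact w⁻¹ β ∈ orb β := ⟨w⁻¹, A.inv_mem hzA, rfl⟩
              rw [hyorb ⟨orb β, hΩm⟩ _ hγorb, hyorb ⟨orb β, hΩm⟩ β (horb_self β)]
              ring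
          have hsub : w v - v = 0 := by
            apply hzero
            intro β hβ
            rw [map_sub]
            exact key β hβ
          exact sub_eq_zero.mp hsub
        · exact hWIfix v (fun α hα => by
            rw [hvE α ((hEf α).mp (hI hα)), hyI α hα]) w hw
      refine ⟨⟨v, hvF⟩, ?_⟩
      funext Ω
      have h4 : Ψ' ⟨v, hvF⟩ Ω = rep ↑Ω Ω.2 v := rfl
      have hrEf : rep ↑Ω Ω.2 ∈ Ef := (hEf _).mp (hrepEI ↑Ω Ω.2).1
      rw [h4, hvE _ hrEf, hyorb Ω _ (hrepmem ↑Ω Ω.2)]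
  -- L is surjective
  obtain ⟨α₁, hα₁E, hα₁I⟩ := Set.exists_of_ssubset (ssubset_of_subset_of_ne hI hIne)
  have hΩ₁ : orb α₁ ∈ OF := (hOF _).mpr ⟨α₁, ⟨hα₁E, hα₁I⟩, rfl⟩
  have hwpos : 0 < wgt (orb α₁) := by
    rw [hwgtdef]
    apply Finset.sum_pos
    · intro α hα
      exact hNnpos α (Finset.mem_filter.mp hα).1
    · exact ⟨α₁, Finset.mem_filter.mpr ⟨(hEf α₁).mp hα₁E, horb_self α₁⟩⟩
  have hLne : ∃ x, L x ≠ 0 := by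
    refine ⟨Pi.single ⟨orb α₁, hΩ₁⟩ 1, ?_⟩
    rw [hLapp]
    rw [Finset.sum_eq_single_of_mem (⟨orb α₁, hΩ₁⟩ : {Ω // Ω ∈ OF})
      (Finset.mem_univ _)]
    · rw [Pi.single_eq_same, mul_one]
      exact ne_of_gt hwpos
    · intro Ω' _ hne
      rw [Pi.single_eq_of_ne hne, mul_zero]
  have hrangeL : LinearMap.range L = ⊤ := by
    obtain ⟨x, hxne⟩ := hLne
    rw [Submodule.eq_top_iff']
    intro c
    refine ⟨(c * (L x)⁻¹) • x, ?_⟩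
    rw [map_smul, smul_eq_mul]
    field_simp
  -- conclusion
  have hrank := LinearMap.finrank_range_add_finrank_ker L
  have hcard : Module.finrank ℚ ({Ω // Ω ∈ OF} → ℚ) = OF.card := by
    rw [Module.finrank_pi ℚ]
    exact Fintype.card_coe OF
  have hfr1 : Module.finrank ℚ F = Module.finrank ℚ (LinearMap.ker L) := by
    rw [← hrange]
    exact (LinearMap.finrank_range_of_inj hinj).symm
  have hfrL : Module.finrank ℚ (LinearMap.range L) = 1 := by
    rw [hrangeL, finrank_top, Module.finrank_self]
  have hOcard : (orbitsOn A (extBase Δ αt \ I)).ncard = OF.card := by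
    rw [hOFdef]
    exact Set.ncard_eq_toFinset_card _ hOfin
  rw [hcard, hfrL] at hrank
  rw [hOcard, hfr1]
  omega
end

section
/- Let I be a subset of Δ̃ with I ≠ Δ̃, let W_I be the subgroup of W generated by the reflections s_α with α ∈ I, and let A be a subgroup of 𝒜 such that z(I) = I for every z ∈ A. Then the group generated by A and W_I is not contained in a proper parabolic subgroup of W — equivalently, the only vector of V fixed by every element of A and of W_I is 0 — if and only if A acts transitively on Δ̃ ∖ I. -/
open Module

variable {V : Type*} [AddCommGroup V] [Module ℚ V]

section AuxLemmas

variable {V : Type*} [AddCommGroup V] [Module ℚ V]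

lemma mem_fixedSub {S : Set (V ≃ₗ[ℚ] V)} {v : V} :
    v ∈ fixedSub S ↔ ∀ w ∈ S, w v = v := Iff.rfl

lemma dact_inv_dact (z : V ≃ₗ[ℚ] V) (β : Module.Dual ℚ V) :
    dact z⁻¹ (dact z β) = β := by
  ext v; show β (z.symm (z v)) = β v; rw [z.symm_apply_apply]

noncomputable def sRefl (α : Module.Dual ℚ V) (c : V) : V →ₗ[ℚ] V :=
  LinearMap.id - α.smulRight c

lemma sRefl_invol (α : Module.Dual ℚ V) (c : V) (h : α c = 2) :
    (sRefl α c).comp (sRefl α c) = LinearMap.id := by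
  ext v
  simp [sRefl, map_sub, map_smul, h, smul_smul]
  module

noncomputable def sReflE (α : Module.Dual ℚ V) (c : V) (h : α c = 2) : V ≃ₗ[ℚ] V :=
  LinearEquiv.ofLinear (sRefl α c) (sRefl α c) (sRefl_invol α c h) (sRefl_invol α c h)

lemma sReflE_apply (α : Module.Dual ℚ V) (c : V) (h : α c = 2) (v : V) :
    sReflE α c h v = v - α v • c := rfl

lemma sReflE_mem (R : RootSystemData V) (S : Set (Module.Dual ℚ V))
    (α : Module.Dual ℚ V) (hα : α ∈ S) (h : α (R.coroot α) = 2) :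
    sReflE α (R.coroot α) h ∈ weylOf R S :=
  Subgroup.subset_closure ⟨α, hα, fun _ => rfl⟩

lemma weylOf_fixes (R : RootSystemData V) (S : Set (Module.Dual ℚ V)) (v : V)
    (hv : ∀ γ ∈ S, γ v = 0) : ∀ w ∈ weylOf R S, w v = v := by
  intro w hw
  induction hw using Subgroup.closure_induction with
  | mem w hwS =>
      obtain ⟨α, hαS, hform⟩ := hwS
      rw [hform v, hv α hαS, zero_smul, sub_zero]
  | one => rfl
  | mul a b _ _ ha hb => show a (b v) = v; rw [hb, ha]
  | inv a _ ha =>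
      show a.symm v = v
      conv_lhs => rw [← ha]
      exact a.symm_apply_apply v

end AuxLemmas

/-- Let I ⊊ Δ̃ and let A ≤ 𝒜 stabilize I. Then the group generated
by A and W_I fixes no nonzero vector of V (equivalently, it is not contained in a
proper parabolic subgroup of W) if and only if A acts transitively on Δ̃ ∖ I. -/
theorem fixed_eq_bot_iff_transitive
    {V : Type*} [AddCommGroup V] [Module ℚ V] [FiniteDimensional ℚ V]
    (R : RootSystemData V)
    (Δ : Finset (Module.Dual ℚ V))
    (hΔΦ : (Δ : Set (Module.Dual ℚ V)) ⊆ R.Φ)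
    (hΔind : LinearIndependent ℚ
      (fun x : (Δ : Set (Module.Dual ℚ V)) => (x : Module.Dual ℚ V)))
    (hΔbase : ∀ α ∈ R.Φ, ∃ c : Module.Dual ℚ V →₀ ℤ,
        (c.support : Set (Module.Dual ℚ V)) ⊆ (Δ : Set (Module.Dual ℚ V)) ∧
        α = c.sum (fun β k => (k : ℚ) • β) ∧
        ((∀ β, 0 ≤ c β) ∨ (∀ β, c β ≤ 0)))
    (αt : Module.Dual ℚ V) (hαtΦ : αt ∈ R.Φ)
    (hhigh : ∀ γ ∈ R.Φ, ∃ c : Module.Dual ℚ V →₀ ℚ,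
        (c.support : Set (Module.Dual ℚ V)) ⊆ (Δ : Set (Module.Dual ℚ V)) ∧
        αt - γ = c.sum (fun β k => k • β) ∧ (∀ β, 0 ≤ c β))
    (hα₀ : -αt ∉ (Δ : Set (Module.Dual ℚ V)))
    (I : Set (Module.Dual ℚ V)) (hI : I ⊆ extBase Δ αt) (hIne : I ≠ extBase Δ αt)
    (A : Subgroup (V ≃ₗ[ℚ] V))
    (hA : (A : Set (V ≃ₗ[ℚ] V)) ⊆ AutTilde R Δ αt)
    (hAI : ∀ z ∈ A, dact z '' I = I) :
    (fixedSub ((A : Set (V ≃ₗ[ℚ] V)) ∪ (weylOf R I : Set (V ≃ₗ[ℚ] V))) = ⊥) ↔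
    (∀ α ∈ extBase Δ αt \ I, ∀ β ∈ extBase Δ αt \ I, ∃ z ∈ A, dact z α = β) := by
    classical
  -- `-αt` is a root
  have hα₀Φ : -αt ∈ R.Φ := by
    have h := R.dual_refl_mem αt hαtΦ αt hαtΦ
    rw [R.pairing_self αt hαtΦ] at h
    have e : αt - (2:ℚ) • αt = -αt := by module
    rwa [e] at h
  have hEΦ : ∀ γ ∈ extBase Δ αt, γ ∈ R.Φ := by
    intro γ hγ
    rcases Set.mem_insert_iff.mp hγ with rfl | hγ'
    · exact hα₀Φ
    · exact hΔΦ hγ'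
  have hpair2 : ∀ γ ∈ extBase Δ αt, γ (R.coroot γ) = 2 :=
    fun γ hγ => R.pairing_self γ (hEΦ γ hγ)
  have hrefl_zero : ∀ γ : Module.Dual ℚ V, γ (R.coroot γ) = 2 →
      ∀ v : V, v - γ v • R.coroot γ = v → γ v = 0 := by
    intro γ h2 v hv
    have h0 : γ v • R.coroot γ = 0 := sub_eq_self.mp hv
    rcases smul_eq_zero.mp h0 with h | h
    · exact h
    · rw [h, map_zero] at h2; norm_num at h2
  -- Δ spans the dual space
  have hspan : Submodule.span ℚ ((Δ : Set (Module.Dual ℚ V))) = ⊤ := by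
    rw [eq_top_iff, ← R.span_eq_top]
    apply Submodule.span_le.mpr
    intro γ hγ
    obtain ⟨c, hsupp, hrepr, -⟩ := hΔbase γ hγ
    rw [hrepr]
    apply Submodule.finsuppSum_mem
    intro β hβ
    exact Submodule.smul_mem _ _
      (Submodule.subset_span (hsupp (Finsupp.mem_support_iff.mpr hβ)))
  have hzero_of : ∀ v : V, (∀ γ ∈ Δ, γ v = 0) → v = 0 := by
    intro v hv
    rw [← Module.forall_dual_apply_eq_zero_iff ℚ v]
    intro φ
    have hφ : φ ∈ Submodule.span ℚ ((Δ : Set (Module.Dual ℚ V))) := by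
      rw [hspan]; exact Submodule.mem_top
    induction hφ using Submodule.span_induction with
    | mem x hx => exact hv x hx
    | zero => rfl
    | add x y _ _ hx hy => rw [LinearMap.add_apply, hx, hy, add_zero]
    | smul a x _ hx => rw [LinearMap.smul_apply, hx, smul_zero]
  have hsum_apply : ∀ (s : Finset (Module.Dual ℚ V)) (g : Module.Dual ℚ V → ℚ) (v : V),
      (∑ γ ∈ s, g γ • γ) v = ∑ γ ∈ s, g γ * γ v := by
    intro s g v
    rw [LinearMap.sum_apply]
    simp
  have huniq0 : ∀ g : Module.Dual ℚ V → ℚ, (∑ γ ∈ Δ, g γ • γ) = 0 → ∀ γ ∈ Δ, g γ = 0 := by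
    intro g h γ hγ
    have hsum : ∑ i ∈ Δ.attach,
        (fun i : (Δ : Set (Module.Dual ℚ V)) => g i) i • (i : Module.Dual ℚ V) = 0 := by
      rw [← h]; exact Finset.sum_attach Δ (fun γ => g γ • γ)
    exact linearIndependent_iff'.mp hΔind Δ.attach (fun i => g i) hsum ⟨γ, hγ⟩
      (Finset.mem_attach _ _)
  have huniq : ∀ g g' : Module.Dual ℚ V → ℚ,
      (∑ γ ∈ Δ, g γ • γ) = (∑ γ ∈ Δ, g' γ • γ) → ∀ γ ∈ Δ, g γ = g' γ := by
    intro g g' h γ hγ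
    have h0 : ∑ γ ∈ Δ, (g γ - g' γ) • γ = 0 := by
      simp only [sub_smul]
      rw [Finset.sum_sub_distrib, h, sub_self]
    have := huniq0 _ h0 γ hγ
    linarith
  have hconv : ∀ c : Module.Dual ℚ V →₀ ℚ,
      (c.support : Set (Module.Dual ℚ V)) ⊆ (Δ : Set (Module.Dual ℚ V)) →
      c.sum (fun β k => k • β) = ∑ β ∈ Δ, c β • β := by
    intro c hsupp
    rw [Finsupp.sum]
    apply Finset.sum_subset (Finset.coe_subset.mp hsupp)
    intro β _ hβ
    rw [Finsupp.notMem_support_iff.mp hβ, zero_smul]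
  -- Δ is nonempty
  have hΔne : Δ.Nonempty := by
    rw [Finset.nonempty_iff_ne_empty]
    intro hΔe
    obtain ⟨c, hsupp, hrepr, -⟩ := hΔbase αt hαtΦ
    have hce : c.support ⊆ (∅ : Finset (Module.Dual ℚ V)) := by
      rw [← hΔe]; exact Finset.coe_subset.mp hsupp
    have h0 : αt = 0 := by
      rw [hrepr, Finsupp.sum, Finset.subset_empty.mp hce]
      simp
    have h2 := R.pairing_self αt hαtΦ
    rw [h0] at h2
    simp at h2
  obtain ⟨γ₀, hγ₀⟩ := hΔne
  obtain ⟨c₀, hc₀supp, hc₀repr, hc₀pos⟩ := hhigh γ₀ (hΔΦ hγ₀)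
  have hexp : ∀ γ : Module.Dual ℚ V, γ ∈ Δ → ∀ c : Module.Dual ℚ V →₀ ℚ,
      (c.support : Set (Module.Dual ℚ V)) ⊆ (Δ : Set (Module.Dual ℚ V)) →
      αt - γ = c.sum (fun β k => k • β) →
      ∑ β ∈ Δ, (c β + if β = γ then (1:ℚ) else 0) • β = αt := by
    intro γ hγ c hsupp hrepr
    have h1 : ∑ β ∈ Δ, c β • β = αt - γ := by rw [← hconv c hsupp, ← hrepr]
    have h2 : ∑ β ∈ Δ, (if β = γ then (1:ℚ) else 0) • β = γ := by
      simp [ite_smul, Finset.sum_ite_eq', hγ]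
    calc ∑ β ∈ Δ, (c β + if β = γ then (1:ℚ) else 0) • β
        = ∑ β ∈ Δ, (c β • β + (if β = γ then (1:ℚ) else 0) • β) :=
          Finset.sum_congr rfl (fun β _ => add_smul _ _ β)
      _ = (∑ β ∈ Δ, c β • β) + ∑ β ∈ Δ, (if β = γ then (1:ℚ) else 0) • β :=
          Finset.sum_add_distrib
      _ = (αt - γ) + γ := by rw [h1, h2]
      _ = αt := by module
  set n : Module.Dual ℚ V → ℚ := fun β => c₀ β + (if β = γ₀ then 1 else 0) with hn_def
  have hn_sum : ∑ β ∈ Δ, n β • β = αt := hexp γ₀ hγ₀ c₀ hc₀supp hc₀repr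
  have hn_pos : ∀ γ ∈ Δ, 0 < n γ := by
    intro γ hγ
    obtain ⟨d, hdsupp, hdrepr, hdpos⟩ := hhigh γ (hΔΦ hγ)
    have h2 := hexp γ hγ d hdsupp hdrepr
    have heq := huniq n (fun β => d β + if β = γ then (1:ℚ) else 0)
      (hn_sum.trans h2.symm) γ hγ
    rw [heq]
    have := hdpos γ
    show 0 < d γ + if γ = γ then (1:ℚ) else 0
    rw [if_pos rfl]
    linarith
  set Dt : Finset (Module.Dual ℚ V) := insert (-αt) Δ with hDt_def
  have hmemDt : ∀ γ : Module.Dual ℚ V, γ ∈ Dt ↔ γ ∈ extBase Δ αt := by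
    intro γ
    simp [hDt_def, extBase]
  have hnotmem : -αt ∉ Δ := fun h => hα₀ (Finset.mem_coe.mpr h)
  set N : Module.Dual ℚ V → ℚ := fun β => if β = -αt then 1 else n β with hN_def
  have hNΔ : ∀ γ ∈ Δ, N γ = n γ := by
    intro γ hγ
    simp only [hN_def]
    rw [if_neg]
    intro h; rw [h] at hγ; exact hnotmem hγ
  have hN_pos : ∀ γ ∈ Dt, 0 < N γ := by
    intro γ hγ
    rcases Finset.mem_insert.mp hγ with rfl | hγ'
    · simp [hN_def]
    · rw [hNΔ γ hγ']; exact hn_pos γ hγ'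
  have hN_rel : ∀ v : V, ∑ γ ∈ Dt, N γ * γ v = 0 := by
    intro v
    rw [hDt_def, Finset.sum_insert hnotmem]
    have h1 : ∑ γ ∈ Δ, N γ * γ v = ∑ γ ∈ Δ, n γ * γ v :=
      Finset.sum_congr rfl (fun γ hγ => by rw [hNΔ γ hγ])
    have h2 : (∑ β ∈ Δ, n β • β) v = αt v := by rw [hn_sum]
    rw [hsum_apply] at h2
    rw [h1, h2]
    simp [hN_def]
  have hIDt : ∀ γ ∈ I, γ ∈ Dt := fun γ hγ => (hmemDt γ).mpr (hI hγ)
  have hexistsv : ∀ f : Module.Dual ℚ V → ℚ, ∃ v : V, ∀ γ ∈ Δ, γ v = f γ := by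
    intro f
    let b : Basis ((Δ : Set (Module.Dual ℚ V))) ℚ (Module.Dual ℚ V) :=
      Basis.mk hΔind (by rw [Subtype.range_coe, hspan])
    refine ⟨(Module.evalEquiv ℚ V).symm (b.constr ℚ (fun i => f i)), ?_⟩
    intro γ hγ
    rw [Module.apply_evalEquiv_symm_apply]
    have hb : γ = b ⟨γ, hγ⟩ := by simp [b, Basis.mk_apply]
    conv_lhs => rw [hb]
    rw [Basis.constr_basis]
  constructor
  · -- fixed = ⊥ → transitivity
    intro hfix α hαmem β hβmem
    have hαE : α ∈ extBase Δ αt := hαmem.1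
    have hαI : α ∉ I := hαmem.2
    have hβE : β ∈ extBase Δ αt := hβmem.1
    have hβI : β ∉ I := hβmem.2
    by_contra hcon
    push_neg at hcon
    set Ω : Set (Module.Dual ℚ V) := {γ | ∃ z ∈ A, dact z α = γ} with hΩ_def
    have hαΩ : α ∈ Ω := ⟨1, A.one_mem, rfl⟩
    have hβΩ : β ∉ Ω := by rintro ⟨z, hz, heq⟩; exact hcon z hz heq
    have hEinv : ∀ z, z ∈ A → ∀ γ, γ ∈ extBase Δ αt ↔ dact z γ ∈ extBase Δ αt := by
      intro z hz γ
      constructor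
      · intro h
        have h1 : dact z γ ∈ dact z '' extBase Δ αt := Set.mem_image_of_mem _ h
        rwa [(hA hz).2] at h1
      · intro h
        have h1 : dact z⁻¹ (dact z γ) ∈ dact z⁻¹ '' extBase Δ αt :=
          Set.mem_image_of_mem _ h
        rwa [(hA (A.inv_mem hz)).2, dact_inv_dact] at h1
    have hIinv : ∀ z, z ∈ A → ∀ γ, γ ∈ I ↔ dact z γ ∈ I := by
      intro z hz γ
      constructor
      · intro h
        have h1 : dact z γ ∈ dact z '' I := Set.mem_image_of_mem _ h
        rwa [hAI z hz] at h1
      · intro h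
        have h1 : dact z⁻¹ (dact z γ) ∈ dact z⁻¹ '' I := Set.mem_image_of_mem _ h
        rwa [hAI z⁻¹ (A.inv_mem hz), dact_inv_dact] at h1
    have hΩinv : ∀ z, z ∈ A → ∀ γ, γ ∈ Ω ↔ dact z γ ∈ Ω := by
      intro z hz γ
      constructor
      · rintro ⟨u, hu, rfl⟩
        exact ⟨z * u, A.mul_mem hz hu, rfl⟩
      · rintro ⟨u, hu, hueq⟩
        refine ⟨z⁻¹ * u, A.mul_mem (A.inv_mem hz) hu, ?_⟩
        calc dact (z⁻¹ * u) α = dact z⁻¹ (dact u α) := rfl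
          _ = dact z⁻¹ (dact z γ) := by rw [hueq]
          _ = γ := dact_inv_dact z γ
    have hΩI : ∀ γ ∈ Ω, γ ∉ I := by
      rintro γ ⟨z, hz, rfl⟩ hγI
      exact hαI ((hIinv z hz α).mpr hγI)
    set P₂ : Module.Dual ℚ V → Prop := fun γ => γ ∉ I ∧ γ ∉ Ω with hP₂
    set s₁ : ℚ := ∑ γ ∈ Dt.filter (fun γ => γ ∈ Ω), N γ with hs₁
    set s₂ : ℚ := ∑ γ ∈ Dt.filter (fun γ => P₂ γ), N γ with hs₂
    have hs₁pos : 0 < s₁ :=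
      Finset.sum_pos (fun γ hγ => hN_pos γ (Finset.mem_of_mem_filter γ hγ))
        ⟨α, Finset.mem_filter.mpr ⟨(hmemDt α).mpr hαE, hαΩ⟩⟩
    have hs₂pos : 0 < s₂ :=
      Finset.sum_pos (fun γ hγ => hN_pos γ (Finset.mem_of_mem_filter γ hγ))
        ⟨β, Finset.mem_filter.mpr ⟨(hmemDt β).mpr hβE, hβI, hβΩ⟩⟩
    set f : Module.Dual ℚ V → ℚ :=
      fun γ => if γ ∈ Ω then s₁⁻¹ else if P₂ γ then -s₂⁻¹ else 0 with hf
    obtain ⟨v, hvΔ⟩ := hexistsv f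
    have hsum_f : ∑ γ ∈ Dt, N γ * f γ = 0 := by
      rw [← Finset.sum_filter_add_sum_filter_not Dt (fun γ => γ ∈ Ω)
        (fun γ => N γ * f γ)]
      have e1 : ∑ γ ∈ Dt.filter (fun γ => γ ∈ Ω), N γ * f γ = 1 := by
        have t1 : ∀ γ ∈ Dt.filter (fun γ => γ ∈ Ω), N γ * f γ = N γ * s₁⁻¹ := by
          intro γ hγ
          have hm := (Finset.mem_filter.mp hγ).2
          simp only [hf]
          rw [if_pos hm]
        rw [Finset.sum_congr rfl t1, ← Finset.sum_mul, ← hs₁,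
          mul_inv_cancel₀ (ne_of_gt hs₁pos)]
      have e2 : ∑ γ ∈ Dt.filter (fun γ => ¬ γ ∈ Ω), N γ * f γ = -1 := by
        rw [← Finset.sum_filter_add_sum_filter_not (Dt.filter (fun γ => ¬ γ ∈ Ω)) P₂
          (fun γ => N γ * f γ)]
        have hff : (Dt.filter (fun γ => ¬ γ ∈ Ω)).filter P₂ = Dt.filter P₂ := by
          rw [Finset.filter_filter]
          apply Finset.filter_congr
          intro γ _
          constructor
          · rintro ⟨-, h⟩; exact h
          · intro h; exact ⟨h.2, h⟩
        have A1 : ∑ γ ∈ (Dt.filter (fun γ => ¬ γ ∈ Ω)).filter P₂, N γ * f γ = -1 := by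
          rw [hff]
          have t1 : ∀ γ ∈ Dt.filter P₂, N γ * f γ = N γ * (-s₂⁻¹) := by
            intro γ hγ
            have hm := (Finset.mem_filter.mp hγ).2
            simp only [hf]
            rw [if_neg hm.2, if_pos hm]
          rw [Finset.sum_congr rfl t1, ← Finset.sum_mul, ← hs₂]
          rw [mul_neg, mul_inv_cancel₀ (ne_of_gt hs₂pos)]
        have A2 : ∑ γ ∈ (Dt.filter (fun γ => ¬ γ ∈ Ω)).filter (fun γ => ¬ P₂ γ),
            N γ * f γ = 0 := by
          apply Finset.sum_eq_zero
          intro γ hγ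
          obtain ⟨h1, h2⟩ := Finset.mem_filter.mp hγ
          obtain ⟨-, h3⟩ := Finset.mem_filter.mp h1
          simp only [hf]
          rw [if_neg h3, if_neg h2, mul_zero]
        rw [A1, A2, add_zero]
      rw [e1, e2]
      norm_num
    have hvals : ∀ γ ∈ Dt, γ v = f γ := by
      intro γ hγ
      rcases Finset.mem_insert.mp (hDt_def ▸ hγ) with rfl | hγ'
      · have h1 := hN_rel v
        rw [hDt_def, Finset.sum_insert hnotmem] at h1
        have h2 := hsum_f
        rw [hDt_def, Finset.sum_insert hnotmem] at h2
        have h3 : ∑ γ ∈ Δ, N γ * γ v = ∑ γ ∈ Δ, N γ * f γ :=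
          Finset.sum_congr rfl (fun γ hγ => by rw [hvΔ γ hγ])
        have hN0 : N (-αt) = 1 := by simp [hN_def]
        rw [hN0, one_mul] at h1 h2
        linarith
      · exact hvΔ γ hγ'
    have hvfix : v ∈ fixedSub ((A : Set (V ≃ₗ[ℚ] V)) ∪ (weylOf R I : Set (V ≃ₗ[ℚ] V))) := by
      rw [mem_fixedSub]
      intro w hw
      rcases hw with hwA | hwI
      · have hwinv : w⁻¹ ∈ A := A.inv_mem hwA
        have hkey : ∀ γ ∈ Δ, γ (w v) = γ v := by
          intro γ hγ
          have hγE : γ ∈ extBase Δ αt := Set.mem_insert_of_mem _ (Finset.mem_coe.mpr hγ)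
          have hδE : dact w⁻¹ γ ∈ extBase Δ αt := (hEinv w⁻¹ hwinv γ).mp hγE
          have e1 : γ (w v) = (dact w⁻¹ γ) v := rfl
          rw [e1, hvals _ ((hmemDt _).mpr hδE), hvals γ ((hmemDt γ).mpr hγE)]
          have hiffΩ : γ ∈ Ω ↔ dact w⁻¹ γ ∈ Ω := hΩinv w⁻¹ hwinv γ
          have hiffI : γ ∈ I ↔ dact w⁻¹ γ ∈ I := hIinv w⁻¹ hwinv γ
          simp only [hf]
          by_cases h1 : γ ∈ Ω
          · rw [if_pos (hiffΩ.mp h1), if_pos h1]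
          · rw [if_neg (fun h => h1 (hiffΩ.mpr h)), if_neg h1]
            by_cases h2 : γ ∈ I
            · rw [if_neg (fun h => h.1 (hiffI.mp h2)), if_neg (fun h => h.1 h2)]
            · rw [if_pos (⟨fun h => h2 (hiffI.mpr h), fun h => h1 (hiffΩ.mpr h)⟩ :
                P₂ (dact w⁻¹ γ)), if_pos (⟨h2, h1⟩ : P₂ γ)]
        have hsub : w v - v = 0 :=
          hzero_of _ (fun γ hγ => by rw [map_sub, hkey γ hγ, sub_self])
        exact sub_eq_zero.mp hsub
      · refine weylOf_fixes R I v ?_ w hwI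
        intro γ hγI
        rw [hvals γ (hIDt γ hγI)]
        simp only [hf]
        rw [if_neg (fun h => hΩI γ h hγI), if_neg (fun h => h.1 hγI)]
    have hv0 : v = 0 := (Submodule.eq_bot_iff _).mp hfix v hvfix
    rcases Set.mem_insert_iff.mp hαE with hα0 | hαΔ
    · have hβΔ : β ∈ Δ := by
        rcases Set.mem_insert_iff.mp hβE with hβ0 | h
        · exact absurd (show β ∈ Ω by rw [hβ0, ← hα0]; exact hαΩ) hβΩ
        · exact Finset.mem_coe.mp h
      have hval := hvΔ β hβΔ
      rw [hv0, map_zero] at hval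
      simp only [hf] at hval
      rw [if_neg hβΩ, if_pos (⟨hβI, hβΩ⟩ : P₂ β)] at hval
      have : s₂⁻¹ = 0 := by linarith
      exact absurd this (inv_ne_zero (ne_of_gt hs₂pos))
    · have hval := hvΔ α (Finset.mem_coe.mp hαΔ)
      rw [hv0, map_zero] at hval
      simp only [hf] at hval
      rw [if_pos hαΩ] at hval
      exact absurd hval.symm (inv_ne_zero (ne_of_gt hs₁pos))
  · -- transitivity → fixed = ⊥
    intro htrans
    rw [Submodule.eq_bot_iff]
    intro v hv
    rw [mem_fixedSub] at hv
    have hvA : ∀ z ∈ A, z v = v := fun z hz => hv z (Or.inl hz)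
    have hvI : ∀ γ ∈ I, γ v = 0 := by
      intro γ hγ
      have h2 : γ (R.coroot γ) = 2 := hpair2 γ (hI hγ)
      have hw := hv (sReflE γ (R.coroot γ) h2) (Or.inr (sReflE_mem R I γ hγ h2))
      exact hrefl_zero γ h2 v hw
    obtain ⟨δ, hδE, hδI⟩ : ∃ δ, δ ∈ extBase Δ αt ∧ δ ∉ I := by
      by_contra h
      push_neg at h
      exact hIne (Set.Subset.antisymm hI h)
    have hconst : ∀ γ ∈ extBase Δ αt, γ ∉ I → γ v = δ v := by
      intro γ hγE hγI
      obtain ⟨z, hz, hzeq⟩ := htrans δ ⟨hδE, hδI⟩ γ ⟨hγE, hγI⟩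
      have hzt : z.symm v = v := by
        conv_lhs => rw [← hvA z hz]
        exact z.symm_apply_apply v
      calc γ v = (dact z δ) v := by rw [hzeq]
        _ = δ (z.symm v) := rfl
        _ = δ v := by rw [hzt]
    have h0 := hN_rel v
    have hterm : ∀ γ ∈ Dt, N γ * γ v = (if γ ∈ I then 0 else N γ * (δ v)) := by
      intro γ hγ
      by_cases hγI : γ ∈ I
      · rw [if_pos hγI, hvI γ hγI, mul_zero]
      · rw [if_neg hγI, hconst γ ((hmemDt γ).mp hγ) hγI]
    rw [Finset.sum_congr rfl hterm, Finset.sum_ite, Finset.sum_const_zero, zero_add,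
      ← Finset.sum_mul] at h0
    have hpos : 0 < ∑ γ ∈ Dt.filter (fun γ => ¬ γ ∈ I), N γ :=
      Finset.sum_pos (fun γ hγ => hN_pos γ (Finset.mem_of_mem_filter γ hγ))
        ⟨δ, Finset.mem_filter.mpr ⟨(hmemDt δ).mpr hδE, hδI⟩⟩
    have hδv : δ v = 0 := by
      rcases mul_eq_zero.mp h0 with h | h
      · exact absurd h (ne_of_gt hpos)
      · exact h
    apply hzero_of
    intro γ hγ
    by_cases hγI : γ ∈ I
    · exact hvI γ hγI
    · rw [hconst γ (Set.mem_insert_of_mem _ (Finset.mem_coe.mpr hγ)) hγI, hδv]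
end
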